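/- arXiv:2511.07611 — 13 statements merged into one kernel-verified Lean document; each statement's English description precedes it below -/
import Mathlib

section
/- Let L be a locally finite modular lattice with a least element ⊥ that contains at least one element different from ⊥. Let w be a projective-constant weighting on L all of whose values are positive, and let r be an integer such that (w, r) satisfies the differential condition on L. Then r > 0. -/
open scoped BigOperators

/-- A weighting `w` on a lattice is projective-constant if it takes equal values on
cover-projective coverings. -/
def ProjConst {L : Type*} [Lattice L] (w : L → L → ℤ) : Prop :=
  ∀ x y : L, x ≠ y → x ⊓ y ⋖ x → x ⊓ y ⋖ y → x ⋖ x ⊔ y → y ⋖ x ⊔ y →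
    w (x ⊓ y) x = w y (x ⊔ y) ∧ w (x ⊓ y) y = w x (x ⊔ y)

/-- The pair `(w, r)` satisfies the differential condition on `L`: for every `x`,
the sets of lower and upper covers of `x` are finite and
`(∑_{y ⋖ x} w(y,x)) + r = ∑_{z : x ⋖ z} w(x,z)`. -/
def DiffCond {L : Type*} [Lattice L] (w : L → L → ℤ) (r : ℤ) : Prop :=
  ∀ x : L, {y | y ⋖ x}.Finite ∧ {z | x ⋖ z}.Finite ∧
    ((∑ᶠ y ∈ {y | y ⋖ x}, w y x) + r = ∑ᶠ z ∈ {z | x ⋖ z}, w x z)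

theorem DiffCond.eq_finsum_bot_covBy {L : Type*} [Lattice L] [OrderBot L] {w : L → L → ℤ}
    {r : ℤ} (hdiff : DiffCond w r) : r = ∑ᶠ z ∈ {z : L | ⊥ ⋖ z}, w ⊥ z := by
  have hno_lower : {y : L | y ⋖ ⊥} = ∅ :=
    Set.eq_empty_of_forall_notMem fun _ hy => not_lt_bot hy.lt
  simpa [hno_lower] using (hdiff ⊥).2.2

theorem DiffCond.pos_of_bot_covBy {L : Type*} [Lattice L] [OrderBot L] {w : L → L → ℤ}
    {r : ℤ} (hdiff : DiffCond w r) (hpos : ∀ x y : L, x ⋖ y → 0 < w x y) {a : L}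
    (ha : ⊥ ⋖ a) : 0 < r := by
  rw [hdiff.eq_finsum_bot_covBy]
  exact finsum_cond_pos (fun z hz => (hpos _ _ hz).le) ⟨a, ha, hpos _ _ ha⟩
    ((hdiff ⊥).2.1.inter_of_right _)

theorem stmt0_general {L : Type*} [Lattice L] [LocallyFiniteOrder L]
    [OrderBot L] (hnt : ∃ x : L, x ≠ ⊥)
    (w : L → L → ℤ)
    (hpos : ∀ x y : L, x ⋖ y → 0 < w x y)
    (r : ℤ) (hdiff : DiffCond w r) : 0 < r := by
  obtain ⟨x, hx⟩ := hnt
  obtain ⟨a, ha, -⟩ := exists_covBy_le_of_lt (bot_lt_iff_ne_bot.2 hx)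
  exact hdiff.pos_of_bot_covBy hpos ha

/-- If `L` is a locally finite modular lattice with `⊥` having some element `≠ ⊥`,
`w` is a projective-constant weighting with all values positive, and `(w, r)` satisfies
the differential condition, then `r > 0`. -/
theorem stmt0 {L : Type*} [Lattice L] [LocallyFiniteOrder L] [IsModularLattice L]
    [OrderBot L] (hnt : ∃ x : L, x ≠ ⊥)
    (w : L → L → ℤ) (hproj : ProjConst w)
    (hpos : ∀ x y : L, x ⋖ y → 0 < w x y)
    (r : ℤ) (hdiff : DiffCond w r) : 0 < r :=
  stmt0_general hnt w hpos r hdiff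
end

section
/- Let L₁ and L₂ be nonempty, locally finite, modular lattices and equip L = L₁ × L₂ with the componentwise order (so L is a locally finite modular lattice). Let w be a projective-constant weighting on L and r an integer such that (w, r) satisfies the differential condition on L. Then there exist weightings w₁ on L₁ and w₂ on L₂ and integers r₁ and r₂ such that: (1) (w₁, r₁) satisfies the differential condition on L₁; (2) (w₂, r₂) satisfies the differential condition on L₂; (3) r = r₁ + r₂; (4) for every covering pair x ⋖ y in L₁ and every z ∈ L₂, w((x, z), (y, z)) = w₁(x, y); and (5) for every v ∈ L₁ and every covering pair x ⋖ y in L₂, w((v, x), (v, y)) = w₂(x, y). -/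
open scoped BigOperators

/-!
Projective constancy applied to the covering square `(x, z) ⋖ (x, v), (y, z) ⋖ (y, v)` shows
that the weight of a horizontal cover `(x, z) ⋖ (y, z)` does not change when `z` moves along a
cover, hence (local finiteness connects any two points by covers through their meet) it does not
depend on `z` at all; symmetrically for vertical covers. Since the covers of `(x, z)` are the
horizontal and the vertical ones, the net weight of `w` at `(x, z)` is the sum of the net weights
of the factor weightings at `x` and at `z`. This sum equals `r` for all `x, z`, so each summand is
constant.
-/

theorem eq_of_forall_covBy {α β : Type*} [SemilatticeInf α] [LocallyFiniteOrder α] {f : α → β}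
    (h : ∀ a b, a ⋖ b → f a = f b) (a b : α) : f a = f b := by
  have hle : ∀ {c d : α}, c ≤ d → f c = f d := fun hcd => by
    simpa [Relation.reflTransGen_eq_self] using
      Relation.ReflTransGen.lift f h _ _ (le_iff_reflTransGen_covBy.mp hcd)
  exact (hle inf_le_left).symm.trans (hle inf_le_right)

noncomputable def netWeight {L : Type*} [Preorder L] (w : L → L → ℤ) (x : L) : ℤ :=
  (∑ᶠ z ∈ {z | x ⋖ z}, w x z) - ∑ᶠ y ∈ {y | y ⋖ x}, w y x

namespace Prod

variable {α β : Type*} [PartialOrder α] [PartialOrder β]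

theorem setOf_covBy_mk (x : α) (z : β) :
    {p | p ⋖ (x, z)} = (·, z) '' {y | y ⋖ x} ∪ (x, ·) '' {u | u ⋖ z} := by
  ext ⟨a, b⟩
  simp only [Set.mem_ofPred_eq, Set.mem_union, Set.mem_image, mk_covBy_mk_iff, Prod.mk.injEq]
  grind

theorem setOf_mk_covBy (x : α) (z : β) :
    {p | (x, z) ⋖ p} = (·, z) '' {y | x ⋖ y} ∪ (x, ·) '' {u | z ⋖ u} := by
  ext ⟨a, b⟩
  simp only [Set.mem_ofPred_eq, Set.mem_union, Set.mem_image, mk_covBy_mk_iff, Prod.mk.injEq]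
  grind

end Prod

theorem diffCond_iff_netWeight {L : Type*} [Lattice L] {w : L → L → ℤ} {r : ℤ} :
    DiffCond w r ↔
      ∀ x : L, {y | y ⋖ x}.Finite ∧ {z | x ⋖ z}.Finite ∧ netWeight w x = r :=
  forall_congr' fun _ => and_congr_right' <| and_congr_right'
    ⟨fun h => by rw [netWeight, ← h]; ring, fun h => by rw [← h, netWeight]; ring⟩

section Product

variable {L₁ L₂ : Type*}

section PartialOrder

variable [PartialOrder L₁] [PartialOrder L₂] {x : L₁} {z : L₂}

theorem Set.Finite.setOf_covBy_fst (z : L₂) (h : {p | p ⋖ (x, z)}.Finite) :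
    {y | y ⋖ x}.Finite := by
  simpa [Prod.mk_covBy_mk_iff_left] using h.preimage (Prod.mk_left_injective z).injOn

theorem Set.Finite.setOf_fst_covBy (z : L₂) (h : {p | (x, z) ⋖ p}.Finite) :
    {y | x ⋖ y}.Finite := by
  simpa [Prod.mk_covBy_mk_iff_left] using h.preimage (Prod.mk_left_injective z).injOn

theorem Set.Finite.setOf_covBy_snd (x : L₁) (h : {p | p ⋖ (x, z)}.Finite) :
    {u | u ⋖ z}.Finite := by
  simpa [Prod.mk_covBy_mk_iff_right] using h.preimage (Prod.mk_right_injective x).injOn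

theorem Set.Finite.setOf_snd_covBy (x : L₁) (h : {p | (x, z) ⋖ p}.Finite) :
    {u | z ⋖ u}.Finite := by
  simpa [Prod.mk_covBy_mk_iff_right] using h.preimage (Prod.mk_right_injective x).injOn

theorem finsum_mem_setOf_covBy_mk {M : Type*} [AddCommMonoid M] (f : L₁ × L₂ → M)
    (h₁ : {y | y ⋖ x}.Finite) (h₂ : {u | u ⋖ z}.Finite) :
    ∑ᶠ p ∈ {p | p ⋖ (x, z)}, f p =
      (∑ᶠ y ∈ {y | y ⋖ x}, f (y, z)) + ∑ᶠ u ∈ {u | u ⋖ z}, f (x, u) := by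
  have hdisj : Disjoint ((·, z) '' {y | y ⋖ x}) ((x, ·) '' {u | u ⋖ z}) := by
    rw [Set.disjoint_left]
    rintro _ ⟨y, hy, rfl⟩ ⟨u, -, h⟩
    exact hy.ne' (congrArg Prod.fst h)
  rw [Prod.setOf_covBy_mk, finsum_mem_union hdisj (h₁.image _) (h₂.image _),
    finsum_mem_image (Prod.mk_left_injective z).injOn,
    finsum_mem_image (Prod.mk_right_injective x).injOn]

theorem finsum_mem_setOf_mk_covBy {M : Type*} [AddCommMonoid M] (f : L₁ × L₂ → M)
    (h₁ : {y | x ⋖ y}.Finite) (h₂ : {u | z ⋖ u}.Finite) :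
    ∑ᶠ p ∈ {p | (x, z) ⋖ p}, f p =
      (∑ᶠ y ∈ {y | x ⋖ y}, f (y, z)) + ∑ᶠ u ∈ {u | z ⋖ u}, f (x, u) := by
  have hdisj : Disjoint ((·, z) '' {y | x ⋖ y}) ((x, ·) '' {u | z ⋖ u}) := by
    rw [Set.disjoint_left]
    rintro _ ⟨y, hy, rfl⟩ ⟨u, -, h⟩
    exact hy.ne (congrArg Prod.fst h)
  rw [Prod.setOf_mk_covBy, finsum_mem_union hdisj (h₁.image _) (h₂.image _),
    finsum_mem_image (Prod.mk_left_injective z).injOn,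
    finsum_mem_image (Prod.mk_right_injective x).injOn]

end PartialOrder

variable [Lattice L₁] [Lattice L₂] {w : L₁ × L₂ → L₁ × L₂ → ℤ}

namespace ProjConst

variable (hw : ProjConst w)
include hw

theorem covBy_square {x y : L₁} {z v : L₂} (hxy : x ⋖ y) (hzv : z ⋖ v) :
    w (x, z) (x, v) = w (y, z) (y, v) ∧ w (x, z) (y, z) = w (x, v) (y, v) := by
  have hinf : (x, v) ⊓ (y, z) = (x, z) := by simp [hxy.le, hzv.le]
  have hsup : (x, v) ⊔ (y, z) = (y, v) := by simp [hxy.le, hzv.le]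
  have hne : (x, v) ≠ (y, z) := fun h => hxy.ne (congrArg Prod.fst h)
  simpa [hinf, hsup] using hw (x, v) (y, z) hne
    (hinf ▸ Prod.mk_covBy_mk_iff_right.2 hzv) (hinf ▸ Prod.mk_covBy_mk_iff_left.2 hxy)
    (hsup ▸ Prod.mk_covBy_mk_iff_left.2 hxy) (hsup ▸ Prod.mk_covBy_mk_iff_right.2 hzv)

theorem weight_mk_left_eq [LocallyFiniteOrder L₂] {x y : L₁} (hxy : x ⋖ y) (z z' : L₂) :
    w (x, z) (y, z) = w (x, z') (y, z') :=
  eq_of_forall_covBy (f := fun u => w (x, u) (y, u))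
    (fun _ _ hzv => (hw.covBy_square hxy hzv).2) z z'

theorem weight_mk_right_eq [LocallyFiniteOrder L₁] {z v : L₂} (hzv : z ⋖ v) (x x' : L₁) :
    w (x, z) (x, v) = w (x', z) (x', v) :=
  eq_of_forall_covBy (f := fun u => w (u, z) (u, v))
    (fun _ _ hxy => (hw.covBy_square hxy hzv).1) x x'

end ProjConst

theorem DiffCond.netWeight_add {r : ℤ} (hw : DiffCond w r) {w₁ : L₁ → L₁ → ℤ}
    {w₂ : L₂ → L₂ → ℤ} (h₁ : ∀ x y, x ⋖ y → ∀ z, w (x, z) (y, z) = w₁ x y)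
    (h₂ : ∀ x z v, z ⋖ v → w (x, z) (x, v) = w₂ z v) (x : L₁) (z : L₂) :
    netWeight w₁ x + netWeight w₂ z = r := by
  obtain ⟨hdown, hup, hsum⟩ := hw (x, z)
  rw [finsum_mem_setOf_covBy_mk _ (hdown.setOf_covBy_fst z) (hdown.setOf_covBy_snd x),
    finsum_mem_setOf_mk_covBy _ (hup.setOf_fst_covBy z) (hup.setOf_snd_covBy x),
    finsum_mem_congr (s := {y | y ⋖ x}) rfl fun y hy => h₁ y x hy z,
    finsum_mem_congr (s := {u | u ⋖ z}) rfl fun u hu => h₂ x u z hu,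
    finsum_mem_congr (s := {y | x ⋖ y}) rfl fun y hy => h₁ x y hy z,
    finsum_mem_congr (s := {u | z ⋖ u}) rfl fun u hu => h₂ x z u hu]
    at hsum
  simp only [netWeight]
  linarith

end Product

theorem stmt2_general {L₁ L₂ : Type*} [Lattice L₁] [Lattice L₂]
    [Nonempty L₁] [Nonempty L₂]
    [LocallyFiniteOrder L₁] [LocallyFiniteOrder L₂]
    (w : L₁ × L₂ → L₁ × L₂ → ℤ) (hproj : ProjConst w) (r : ℤ)
    (hdiff : DiffCond w r) :
    ∃ (w₁ : L₁ → L₁ → ℤ) (w₂ : L₂ → L₂ → ℤ) (r₁ r₂ : ℤ),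
      DiffCond w₁ r₁ ∧
      DiffCond w₂ r₂ ∧
      r = r₁ + r₂ ∧
      (∀ x y : L₁, x ⋖ y → ∀ z : L₂, w (x, z) (y, z) = w₁ x y) ∧
      (∀ v : L₁, ∀ x y : L₂, x ⋖ y → w (v, x) (v, y) = w₂ x y) := by
  obtain ⟨x₀⟩ := ‹Nonempty L₁›
  obtain ⟨z₀⟩ := ‹Nonempty L₂›
  set w₁ : L₁ → L₁ → ℤ := fun x y => w (x, z₀) (y, z₀)
  set w₂ : L₂ → L₂ → ℤ := fun z v => w (x₀, z) (x₀, v)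
  have h₁ : ∀ x y, x ⋖ y → ∀ z, w (x, z) (y, z) = w₁ x y :=
    fun _ _ hxy z => hproj.weight_mk_left_eq hxy z z₀
  have h₂ : ∀ x z v, z ⋖ v → w (x, z) (x, v) = w₂ z v :=
    fun x _ _ hzv => hproj.weight_mk_right_eq hzv x x₀
  have hnet := hdiff.netWeight_add h₁ h₂
  refine ⟨w₁, w₂, r - netWeight w₂ z₀, netWeight w₂ z₀, diffCond_iff_netWeight.2 fun x => ?_,
    diffCond_iff_netWeight.2 fun z => ?_, by ring, h₁, h₂⟩
  · obtain ⟨hdown, hup, -⟩ := hdiff (x, z₀)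
    refine ⟨hdown.setOf_covBy_fst z₀, hup.setOf_fst_covBy z₀, ?_⟩
    linarith [hnet x z₀]
  · obtain ⟨hdown, hup, -⟩ := hdiff (x₀, z)
    refine ⟨hdown.setOf_covBy_snd x₀, hup.setOf_snd_covBy x₀, ?_⟩
    linarith [hnet x₀ z, hnet x₀ z₀]

/-- A projective-constant differential weighting on a product of nonempty locally finite
modular lattices factors into differential weightings on the factors, with the differential
degree splitting as a sum. -/
theorem stmt2 {L₁ L₂ : Type*} [Lattice L₁] [Lattice L₂]
    [Nonempty L₁] [Nonempty L₂]
    [LocallyFiniteOrder L₁] [LocallyFiniteOrder L₂]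
    [IsModularLattice L₁] [IsModularLattice L₂]
    (w : L₁ × L₂ → L₁ × L₂ → ℤ) (hproj : ProjConst w) (r : ℤ)
    (hdiff : DiffCond w r) :
    ∃ (w₁ : L₁ → L₁ → ℤ) (w₂ : L₂ → L₂ → ℤ) (r₁ r₂ : ℤ),
      DiffCond w₁ r₁ ∧
      DiffCond w₂ r₂ ∧
      r = r₁ + r₂ ∧
      (∀ x y : L₁, x ⋖ y → ∀ z : L₂, w (x, z) (y, z) = w₁ x y) ∧
      (∀ v : L₁, ∀ x y : L₂, x ⋖ y → w (v, x) (v, y) = w₂ x y) :=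
  stmt2_general w hproj r hdiff
end

section
/- Let L be a locally finite modular lattice and let S be a set of covering pairs of L that is closed under cover-projectivity. Let x ≤ y in L and let x = c₀ ⋖ c₁ ⋖ ⋯ ⋖ cₙ = y and x = d₀ ⋖ d₁ ⋖ ⋯ ⋖ d_m = y be two covering paths from x to y. Then some consecutive pair (cᵢ, cᵢ₊₁) belongs to S if and only if some consecutive pair (dⱼ, dⱼ₊₁) belongs to S. -/
/-!
Induct on the size of the interval `[x, y]`. If both paths start with the same cover, compare
their tails. Otherwise their first steps `a ≠ b` both cover `x = a ⊓ b`, so by semimodularity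
both are covered by `a ⊔ b`. Fix a covering path `p` from `a ⊔ b` to `y`: by induction the tails
behave like `a ⋖ p` and `b ⋖ p`, and cover-projectivity in the diamond `x, a, b, a ⊔ b`
exchanges `(x, a)` with `(b, a ⊔ b)` and `(x, b)` with `(a, a ⊔ b)`.
-/

def CoverProjClosed {L : Type*} [Lattice L] (S : Set (L × L)) : Prop :=
  ∀ x y : L, x ≠ y → x ⊓ y ⋖ x → x ⊓ y ⋖ y → x ⋖ x ⊔ y → y ⋖ x ⊔ y →
    (((x ⊓ y, x) ∈ S ↔ (y, x ⊔ y) ∈ S) ∧ ((x ⊓ y, y) ∈ S ↔ (x, x ⊔ y) ∈ S))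

section CoverPaths

open Finset

variable {L : Type*}

def IsCoverPath [Preorder L] (c : ℕ → L) (n : ℕ) : Prop :=
  ∀ i < n, c i ⋖ c (i + 1)

def PathMeets (S : Set (L × L)) (c : ℕ → L) (n : ℕ) : Prop :=
  ∃ i < n, (c i, c (i + 1)) ∈ S

def seqCons (a : L) (e : ℕ → L) : ℕ → L
  | 0 => a
  | i + 1 => e i

theorem pathMeets_zero (S : Set (L × L)) (c : ℕ → L) : ¬PathMeets S c 0 := by
  simp [PathMeets]

theorem pathMeets_succ {S : Set (L × L)} {c : ℕ → L} {n : ℕ} :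
    PathMeets S c (n + 1) ↔ (c 0, c 1) ∈ S ∨ PathMeets S (fun i => c (i + 1)) n :=
  Nat.exists_lt_succ_left

namespace IsCoverPath

variable [Preorder L] {c e : ℕ → L} {n k : ℕ}

theorem tail (hc : IsCoverPath c (n + 1)) : IsCoverPath (fun i => c (i + 1)) n :=
  fun i hi => hc (i + 1) (by omega)

theorem cons {a : L} (ha : a ⋖ e 0) (he : IsCoverPath e k) : IsCoverPath (seqCons a e) (k + 1)
  | 0, _ => ha
  | i + 1, hi => he i (by omega)

theorem head_le_last (hc : IsCoverPath c n) : c 0 ≤ c n := by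
  induction n generalizing c with
  | zero => rfl
  | succ n ih => exact (hc 0 n.succ_pos).le.trans (ih hc.tail)

theorem head_lt_last (hc : IsCoverPath c (n + 1)) : c 0 < c (n + 1) :=
  (hc 0 n.succ_pos).lt.trans_le hc.tail.head_le_last

theorem eq_zero_of_head_eq_last (hc : IsCoverPath c n) (h : c 0 = c n) : n = 0 := by
  cases n with
  | zero => rfl
  | succ n => exact absurd h hc.head_lt_last.ne

end IsCoverPath

theorem exists_isCoverPath [PartialOrder L] [LocallyFiniteOrder L] {a b : L} (hab : a ≤ b) :
    ∃ k e, e 0 = a ∧ e k = b ∧ IsCoverPath e k := by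
  refine (le_iff_reflTransGen_covBy.1 hab).head_induction_on
    ⟨0, fun _ => b, rfl, rfl, fun _ h => absurd h (Nat.not_lt_zero _)⟩ ?_
  rintro a c hac - ⟨k, e, he0, hek, he⟩
  exact ⟨k + 1, seqCons a e, rfl, hek, he.cons (he0 ▸ hac)⟩

section WeakUpperModular

variable [Lattice L] [IsWeakUpperModularLattice L] {x a b : L}

theorem covBy_sup_of_covBy_of_covBy (ha : x ⋖ a) (hb : x ⋖ b) (hab : a ≠ b) : a ⋖ a ⊔ b :=
  have hinf : a ⊓ b = x := ha.wcovBy.inf_eq hb.wcovBy hab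
  covBy_sup_of_inf_covBy_of_inf_covBy_left (hinf ▸ ha) (hinf ▸ hb)

theorem CoverProjClosed.mem_iff_of_covBy_of_covBy {S : Set (L × L)} (hS : CoverProjClosed S)
    (ha : x ⋖ a) (hb : x ⋖ b) (hab : a ≠ b) :
    ((x, a) ∈ S ↔ (b, a ⊔ b) ∈ S) ∧ ((x, b) ∈ S ↔ (a, a ⊔ b) ∈ S) := by
  have hinf : a ⊓ b = x := ha.wcovBy.inf_eq hb.wcovBy hab
  have := hS a b hab (hinf ▸ ha) (hinf ▸ hb) (covBy_sup_of_covBy_of_covBy ha hb hab)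
    (sup_comm a b ▸ covBy_sup_of_covBy_of_covBy hb ha hab.symm)
  rwa [hinf] at this

end WeakUpperModular

theorem CoverProjClosed.pathMeets_iff [Lattice L] [LocallyFiniteOrder L]
    [IsWeakUpperModularLattice L]
    {S : Set (L × L)} (hS : CoverProjClosed S) {c d : ℕ → L} {n m : ℕ}
    (hc : IsCoverPath c n) (hd : IsCoverPath d m) (h0 : c 0 = d 0) (hlast : c n = d m) :
    PathMeets S c n ↔ PathMeets S d m := by
  induction hN : #(Icc (c 0) (c n)) using Nat.strong_induction_on generalizing c d n m with
  | _ N ih =>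
  cases n with
  | zero =>
    obtain rfl : m = 0 := hd.eq_zero_of_head_eq_last (h0 ▸ hlast)
    simp only [pathMeets_zero]
  | succ n =>
  cases m with
  | zero => exact absurd (h0.trans hlast.symm) hc.head_lt_last.ne
  | succ m =>
  have ih' : ∀ {c' d' : ℕ → L} {n' m' : ℕ}, IsCoverPath c' n' → IsCoverPath d' m' →
      c 0 < c' 0 → c' 0 = d' 0 → c' n' = c (n + 1) → d' m' = c (n + 1) →
      (PathMeets S c' n' ↔ PathMeets S d' m') := fun hc' hd' hlt h0' hl hl' =>
    ih _ (hl ▸ hN ▸ card_lt_card (Icc_ssubset_Icc_left hc.head_le_last hlt le_rfl))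
      hc' hd' h0' (hl.trans hl'.symm) rfl
  rw [pathMeets_succ, pathMeets_succ, ← h0]
  have hxa : c 0 ⋖ c 1 := hc 0 n.succ_pos
  have hxb : c 0 ⋖ d 1 := h0 ▸ hd 0 m.succ_pos
  by_cases hab : c 1 = d 1
  · rw [hab, ih' hc.tail hd.tail (hab ▸ hxa.lt) hab rfl hlast.symm]
  obtain ⟨k, e, he0, hek, he⟩ :=
    exists_isCoverPath (sup_le hc.tail.head_le_last (hlast ▸ hd.tail.head_le_last))
  have haz := covBy_sup_of_covBy_of_covBy hxa hxb hab
  have hbz := sup_comm (c 1) (d 1) ▸ covBy_sup_of_covBy_of_covBy hxb hxa (Ne.symm hab)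
  rw [ih' hc.tail (he.cons (he0 ▸ haz)) hxa.lt rfl rfl hek,
    ih' hd.tail (he.cons (he0 ▸ hbz)) hxb.lt rfl hlast.symm hek,
    pathMeets_succ, pathMeets_succ]
  obtain ⟨hxa_iff, hxb_iff⟩ := hS.mem_iff_of_covBy_of_covBy hxa hxb hab
  simp only [seqCons, he0, hxa_iff, hxb_iff]
  tauto

end CoverPaths

theorem stmt3_general {L : Type*} [Lattice L] [LocallyFiniteOrder L] [IsModularLattice L]
    (S : Set (L × L)) (hS : CoverProjClosed S)
    (x y : L)
    (n : ℕ) (c : ℕ → L) (hc0 : c 0 = x) (hcn : c n = y)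
    (hc : ∀ i < n, c i ⋖ c (i + 1))
    (m : ℕ) (d : ℕ → L) (hd0 : d 0 = x) (hdm : d m = y)
    (hd : ∀ j < m, d j ⋖ d (j + 1)) :
    (∃ i < n, (c i, c (i + 1)) ∈ S) ↔ (∃ j < m, (d j, d (j + 1)) ∈ S) :=
  hS.pathMeets_iff hc hd (hc0.trans hd0.symm) (hcn.trans hdm.symm)

/-- Given two covering paths from `x` to `y` in a locally finite modular lattice and a set
`S` of covering pairs closed under cover-projectivity, one path contains a covering pair in
`S` iff the other one does. -/
theorem stmt3 {L : Type*} [Lattice L] [LocallyFiniteOrder L] [IsModularLattice L]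
    (S : Set (L × L)) (hS : CoverProjClosed S)
    (x y : L) (hxy : x ≤ y)
    (n : ℕ) (c : ℕ → L) (hc0 : c 0 = x) (hcn : c n = y)
    (hc : ∀ i < n, c i ⋖ c (i + 1))
    (m : ℕ) (d : ℕ → L) (hd0 : d 0 = x) (hdm : d m = y)
    (hd : ∀ j < m, d j ⋖ d (j + 1)) :
    (∃ i < n, (c i, c (i + 1)) ∈ S) ↔ (∃ j < m, (d j, d (j + 1)) ∈ S) :=
  stmt3_general S hS x y n c hc0 hcn hc m d hd0 hdm hd
end

section
/- Let L be a locally finite modular lattice and let S be a set of covering pairs of L that is closed under cover-projectivity. Then the relation ∼ is transitive: for all x, y, z ∈ L, if x ∼ y and y ∼ z then x ∼ z. -/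
/-- `Sim S x y` holds iff every covering path from `x ⊓ y` to `x ⊔ y` contains no covering
pair belonging to `S`. -/
def Sim {L : Type*} [Lattice L] (S : Set (L × L)) (x y : L) : Prop :=
  ∀ (n : ℕ) (c : ℕ → L), c 0 = x ⊓ y → c n = x ⊔ y → (∀ i < n, c i ⋖ c (i + 1)) →
    ∀ i < n, (c i, c (i + 1)) ∉ S

section LocallyFinite

variable {α : Type*} [PartialOrder α] [LocallyFiniteOrder α]

instance LocallyFiniteOrder.isStronglyAtomic : IsStronglyAtomic α where
  exists_covBy_le_of_lt _ _ h := by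
    obtain ⟨x, hax, hxb⟩ := Relation.TransGen.head'_iff.1 (transGen_covBy_of_lt h)
    exact ⟨x, hax, le_iff_reflTransGen_covBy.2 hxb⟩

theorem covBy_le_induction {b : α} {motive : (a : α) → a ≤ b → Prop}
    (ih : ∀ a (hab : a ≤ b), (∀ e (_ : a ⋖ e) (heb : e ≤ b), motive e heb) → motive a hab)
    {a : α} (hab : a ≤ b) : motive a hab := by
  induction hn : (Finset.Icc a b).card using Nat.strong_induction_on generalizing a with
  | _ n IH =>
    refine ih a hab fun e hae heb => IH _ ?_ heb rfl
    exact hn ▸ Finset.card_lt_card (Finset.Icc_ssubset_Icc_left hab hae.lt le_rfl)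

end LocallyFinite

theorem Relation.ReflTransGen.exists_seq {α : Type*} {r : α → α → Prop} {a b : α}
    (h : Relation.ReflTransGen r a b) :
    ∃ n, ∃ c : ℕ → α, c 0 = a ∧ c n = b ∧ ∀ i < n, r (c i) (c (i + 1)) := by
  induction h using Relation.ReflTransGen.head_induction_on with
  | refl => exact ⟨0, fun _ => b, rfl, rfl, by simp⟩
  | head hac _ ih =>
    obtain ⟨n, c, hc0, hcn, hc⟩ := ih
    refine ⟨n + 1, fun i => if i = 0 then _ else c (i - 1), rfl, by simpa using hcn, ?_⟩
    rintro (_ | i) hi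
    · simpa [hc0] using hac
    · simpa using hc i (by omega)

section Lattice

variable {L : Type*} [Lattice L]

theorem exists_covBy_seq_through [LocallyFiniteOrder L] {u a b v : L} (hua : u ≤ a)
    (hab : a ⋖ b) (hbv : b ≤ v) :
    ∃ n, ∃ c : ℕ → L, c 0 = u ∧ c n = v ∧ (∀ i < n, c i ⋖ c (i + 1)) ∧
      ∃ i < n, c i = a ∧ c (i + 1) = b := by
  obtain ⟨m, p, hp0, hpm, hp⟩ := (le_iff_reflTransGen_covBy.1 hua).exists_seq
  obtain ⟨k, q, hq0, hqk, hq⟩ := (le_iff_reflTransGen_covBy.1 hbv).exists_seq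
  refine ⟨m + 1 + k, fun i => if i ≤ m then p i else q (i - (m + 1)), by simp [hp0], ?_, ?_,
    m, by omega, by simp [hpm], by simp [hq0]⟩
  · simp [show ¬ m + 1 + k ≤ m by omega, hqk]
  · intro i hi
    rcases lt_trichotomy i m with h | rfl | h
    · simpa [h.le, Nat.succ_le_of_lt h] using hp i h
    · simpa [hpm, hq0] using hab
    · simpa [show ¬ i ≤ m by omega, show ¬ i < m by omega,
        show i + 1 - (m + 1) = i - (m + 1) + 1 by omega]
        using hq (i - (m + 1)) (by omega)

theorem inf_eq_of_covBy_of_covBy {u e w : L} (he : u ⋖ e) (hw : u ⋖ w) (hne : e ≠ w) :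
    e ⊓ w = u := by
  rcases he.eq_or_eq (le_inf he.le hw.le) inf_le_left with h | h
  · exact h
  · rcases hw.eq_or_eq he.le (inf_eq_left.1 h) with h' | h'
    · exact absurd h' he.ne'
    · exact absurd h' hne

variable (S : Set (L × L))

def CoverFree (u v : L) : Prop :=
  ∀ a b, u ≤ a → a ⋖ b → b ≤ v → (a, b) ∉ S

variable {S}

theorem CoverFree.mono {u v u' v' : L} (h : CoverFree S u v) (hu : u ≤ u') (hv : v' ≤ v) :
    CoverFree S u' v' :=
  fun a b hua hab hbv => h a b (hu.trans hua) hab (hbv.trans hv)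

theorem sim_iff_coverFree [LocallyFiniteOrder L] {x y : L} :
    Sim S x y ↔ CoverFree S (x ⊓ y) (x ⊔ y) := by
  constructor
  · intro h a b hua hab hbv habS
    obtain ⟨n, c, hc0, hcn, hc, i, hi, hca, hcb⟩ := exists_covBy_seq_through hua hab hbv
    exact h n c hc0 hcn hc i hi (hca ▸ hcb ▸ habS)
  · intro h n c hc0 hcn hc i hi
    have hmono : MonotoneOn c (Set.Iic n) :=
      monotoneOn_of_le_add_one Set.ordConnected_Iic fun j _ _ hj => (hc j hj).le
    refine h _ _ (hc0 ▸ hmono ?_ ?_ (Nat.zero_le i)) (hc i hi) (hcn ▸ hmono ?_ ?_ hi) <;>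
      simp only [Set.mem_Iic] <;> omega

end Lattice

namespace CoverProjClosed

variable {L : Type*} [Lattice L] [IsModularLattice L] {S : Set (L × L)}

theorem mem_iff_sup_mem (hS : CoverProjClosed S) {u e w : L} (he : u ⋖ e) (hw : u ⋖ w)
    (hne : e ≠ w) : (u, w) ∈ S ↔ (e, e ⊔ w) ∈ S := by
  have hinf := inf_eq_of_covBy_of_covBy he hw hne
  have h := hS e w hne (hinf ▸ he) (hinf ▸ hw) (CovBy.sup_of_inf_right (hinf ▸ hw))
    (CovBy.sup_of_inf_left (hinf ▸ he))
  rw [hinf] at h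
  exact h.2

theorem sup_mem_iff [LocallyFiniteOrder L] (hS : CoverProjClosed S) {a w : L} (h : a ⊓ w ⋖ w) :
    (a, a ⊔ w) ∈ S ↔ (a ⊓ w, w) ∈ S := by
  suffices ∀ u (hua : u ≤ a) w, u ⋖ w → a ⊓ w = u → ((a, a ⊔ w) ∈ S ↔ (u, w) ∈ S) from
    this _ inf_le_left w h rfl
  intro u hua
  induction hua using covBy_le_induction with
  | ih u hua IH =>
    intro w huw hinf
    rcases hua.eq_or_lt with rfl | hlt
    · rw [sup_eq_right.2 huw.le]
    obtain ⟨e, hue, hea⟩ := exists_covBy_le_of_lt hlt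
    have hne : e ≠ w := by
      rintro rfl
      exact hue.ne (hinf ▸ inf_eq_right.2 hea)
    have hew : e ⋖ e ⊔ w := CovBy.sup_of_inf_right (inf_eq_of_covBy_of_covBy hue huw hne ▸ huw)
    have hinf' : a ⊓ (e ⊔ w) = e := by
      rw [inf_comm, sup_inf_assoc_of_le w hea, inf_comm, hinf, sup_eq_left.2 hue.le]
    rw [hS.mem_iff_sup_mem hue huw hne, ← IH e hue hea _ hew hinf', ← sup_assoc,
      sup_eq_left.2 hea]

theorem coverFree_of_covBy [LocallyFiniteOrder L] (hS : CoverProjClosed S) {u e v : L}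
    (hue : u ⋖ e) (hev : e ≤ v) (huS : (u, e) ∉ S) (h : CoverFree S e v) : CoverFree S u v := by
  induction (hue.le.trans hev : u ≤ v) using covBy_le_induction generalizing e with
  | ih u _ IH =>
    -- Another cover `f` of `u` spans a diamond with `e`, which moves `(u, f)` to `(e, e ⊔ f)`
    -- inside the `S`-free `[e, v]` and `(f, f ⊔ e)` to `(u, e)`; so induction applies at `f`.
    have hcov : ∀ f, u ⋖ f → f ≤ v → (u, f) ∉ S ∧ CoverFree S f v := by
      intro f huf hfv
      by_cases hef : e = f
      · exact hef ▸ ⟨huS, h⟩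
      have hinf := inf_eq_of_covBy_of_covBy hue huf hef
      have hfe : f ⋖ f ⊔ e := CovBy.sup_of_inf_right (inf_comm e f ▸ hinf ▸ hue)
      refine ⟨fun hufS => ?_, IH f huf hfv hfe (sup_le hfv hev) ?_ (h.mono le_sup_right le_rfl)⟩
      · exact h e (e ⊔ f) le_rfl (CovBy.sup_of_inf_right (hinf ▸ huf)) (sup_le hev hfv)
          ((hS.mem_iff_sup_mem hue huf hef).1 hufS)
      · exact fun hfeS => huS ((hS.mem_iff_sup_mem huf hue (Ne.symm hef)).2 hfeS)
    intro a b hua hab hbv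
    rcases hua.eq_or_lt with rfl | hlt
    · exact (hcov b hab hbv).1
    obtain ⟨f, huf, hfa⟩ := exists_covBy_le_of_lt hlt
    exact (hcov f huf (hfa.trans (hab.le.trans hbv))).2 a b hfa hab hbv

theorem coverFree_trans [LocallyFiniteOrder L] (hS : CoverProjClosed S) {u w v : L}
    (huw : u ≤ w) (hwv : w ≤ v) (h₁ : CoverFree S u w) (h₂ : CoverFree S w v) :
    CoverFree S u v := by
  induction huw using covBy_le_induction with
  | ih u huw IH =>
    rcases huw.eq_or_lt with rfl | hlt
    · exact h₂
    obtain ⟨e, hue, hew⟩ := exists_covBy_le_of_lt hlt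
    exact hS.coverFree_of_covBy hue (hew.trans hwv) (h₁ u e le_rfl hue hew)
      (IH e hue hew (h₁.mono hue.le le_rfl))

theorem coverFree_transpose_up [LocallyFiniteOrder L] (hS : CoverProjClosed S) {a b : L}
    (h : CoverFree S (a ⊓ b) b) : CoverFree S a (a ⊔ b) := by
  intro p q hap hpq hqab hpqS
  have hq : p ⊔ b ⊓ q = q := by
    rw [← sup_inf_assoc_of_le b hpq.le,
      le_antisymm (sup_le (hpq.le.trans hqab) le_sup_right) (sup_le_sup_right hap b),
      inf_eq_right.2 hqab]
  have hcov : p ⊓ (b ⊓ q) ⋖ b ⊓ q := CovBy.inf_of_sup_left (hq.symm ▸ hpq)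
  refine h _ _ ?_ hcov inf_le_left ((hS.sup_mem_iff hcov).1 (hq.symm ▸ hpqS))
  exact le_inf (inf_le_left.trans hap)
    (le_inf inf_le_right (inf_le_left.trans (hap.trans hpq.le)))

theorem coverFree_transpose_down [LocallyFiniteOrder L] (hS : CoverProjClosed S) {a b : L}
    (h : CoverFree S a (a ⊔ b)) : CoverFree S (a ⊓ b) b := by
  intro p q hp hpq hqb hpqS
  have hinf : (a ⊔ p) ⊓ q = p := by
    rw [sup_comm, sup_inf_assoc_of_le a hpq.le,
      sup_eq_left.2 ((inf_le_inf_left a hqb).trans hp)]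
  have hcov : a ⊔ p ⋖ a ⊔ p ⊔ q := CovBy.sup_of_inf_right (hinf.symm ▸ hpq)
  refine h _ _ le_sup_left hcov
    (sup_le (sup_le_sup_left (hpq.le.trans hqb) a) (hqb.trans le_sup_right)) ?_
  exact (hS.sup_mem_iff (hinf.symm ▸ hpq)).2 (hinf.symm ▸ hpqS)

theorem coverFree_sup_of_inf_sup [LocallyFiniteOrder L] (hS : CoverProjClosed S) {x y z : L}
    (hxy : CoverFree S (x ⊓ y) (x ⊔ y)) (hyz : CoverFree S (y ⊓ z) (y ⊔ z)) :
    CoverFree S x (x ⊔ z) := by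
  have hx : CoverFree S x (x ⊔ y) := hxy.mono inf_le_left le_rfl
  have hz : CoverFree S ((x ⊔ y) ⊓ z) z :=
    hyz.mono (inf_le_inf_right z le_sup_right) le_sup_right
  have hxyz : CoverFree S x (x ⊔ y ⊔ z) :=
    hS.coverFree_trans le_sup_left le_sup_left hx (hS.coverFree_transpose_up hz)
  exact hxyz.mono le_rfl (sup_le_sup_right le_sup_left z)

end CoverProjClosed

/-- The relation `∼` is transitive. -/
theorem stmt4 {L : Type*} [Lattice L] [LocallyFiniteOrder L] [IsModularLattice L]
    (S : Set (L × L)) (hS : CoverProjClosed S) :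
    ∀ x y z : L, Sim S x y → Sim S y z → Sim S x z := by
  intro x y z hxy hyz
  rw [sim_iff_coverFree] at hxy hyz ⊢
  have hxz : CoverFree S x (x ⊔ z) := hS.coverFree_sup_of_inf_sup hxy hyz
  have hzx : CoverFree S z (z ⊔ x) := by
    rw [inf_comm, sup_comm] at hxy hyz
    exact hS.coverFree_sup_of_inf_sup hyz hxy
  have hxz' : CoverFree S (x ⊓ z) x := inf_comm z x ▸ hS.coverFree_transpose_down hzx
  exact hS.coverFree_trans inf_le_left le_sup_left hxz' hxz
end

section
/- Let L be a locally finite modular lattice and let S be a set of covering pairs of L that is closed under cover-projectivity. Then for all x, y ∈ L, x ∼ (x ⊔ y) if and only if (x ⊓ y) ∼ y. -/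
section Paths

variable {L : Type*} [Preorder L]

lemma le_of_covBy_path {n : ℕ} {c : ℕ → L} (hc : ∀ i < n, c i ⋖ c (i + 1)) {j k : ℕ}
    (hjk : j ≤ k) (hkn : k ≤ n) : c j ≤ c k := by
  induction k, hjk using Nat.le_induction with
  | base => rfl
  | succ k _ ih => exact (ih (by omega)).trans (hc k (by omega)).le

end Paths

section Modular

variable {L : Type*} [Lattice L] [IsModularLattice L]

lemma inf_sup_eq_of_le_of_inf_le {a b x : L} (hab : a ≤ b) (h : b ⊓ x ≤ a) :
    b ⊓ (a ⊔ x) = a := by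
  rw [inf_comm, sup_inf_assoc_of_le x hab, inf_comm, sup_eq_left.2 h]

lemma CovBy.sup_right_of_inf_le {a b : L} (hab : a ⋖ b) {x : L} (h : b ⊓ x ≤ a) :
    a ⊔ x ⋖ b ⊔ x := by
  have hcov : b ⊓ (a ⊔ x) ⋖ b := by rwa [inf_sup_eq_of_le_of_inf_le hab.le h]
  simpa [← sup_assoc, sup_eq_left.2 hab.le] using covBy_sup_of_inf_covBy_left hcov

lemma CovBy.inf_right_of_le_sup {a b : L} (hab : a ⋖ b) {y : L} (h : b ≤ a ⊔ y) :
    a ⊓ y ⋖ b ⊓ y :=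
  (hab.toDual.sup_right_of_inf_le (x := OrderDual.toDual y) h).ofDual

end Modular

section CoverProjClosed

variable {L : Type*} [Lattice L] {S : Set (L × L)}

lemma CoverProjClosed.inf_mem_iff_mem_sup [IsUpperModularLattice L] (hS : CoverProjClosed S)
    {b c : L} (hb : b ⊓ c ⋖ b) (hc : b ⊓ c ⋖ c) : (b ⊓ c, b) ∈ S ↔ (c, b ⊔ c) ∈ S := by
  have hbc : b ≠ c := by
    rintro rfl
    exact (inf_idem b ▸ hb).lt.false
  exact (hS b c hbc hb hc (covBy_sup_of_inf_covBy_right hc) (covBy_sup_of_inf_covBy_left hb)).1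

variable [IsModularLattice L]

lemma CoverProjClosed.mem_iff_sup_mem_of_covBy (hS : CoverProjClosed S) {a b t' t : L}
    (hab : a ⋖ b) (ht : t' ⋖ t) (ht'a : t' ≤ a) (htb : b ⊓ t ≤ a) :
    (a, b) ∈ S ↔ (a ⊔ t, b ⊔ t) ∈ S := by
  rcases ht.eq_or_eq (c := t ⊓ a) (le_inf ht.le ht'a) inf_le_left with hta | hta
  · have hcov : a ⋖ a ⊔ t := by
      rw [sup_comm]
      exact covBy_sup_of_inf_covBy_left (hta ▸ ht)
    have hmeet := inf_sup_eq_of_le_of_inf_le hab.le htb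
    have hjoin : b ⊔ (a ⊔ t) = b ⊔ t := by rw [← sup_assoc, sup_eq_left.2 hab.le]
    have := hS.inf_mem_iff_mem_sup (b := b) (c := a ⊔ t) (by rwa [hmeet]) (by rwa [hmeet])
    rwa [hmeet, hjoin] at this
  · have hta : t ≤ a := inf_eq_left.1 hta
    rw [sup_eq_left.2 hta, sup_eq_left.2 (hta.trans hab.le)]

lemma CoverProjClosed.sup_mem_iff_s5 [LocallyFiniteOrder L] (hS : CoverProjClosed S) {a b x : L}
    (hab : a ⋖ b) (hbx : b ⊓ x ≤ a) : (a ⊔ x, b ⊔ x) ∈ S ↔ (a, b) ∈ S := by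
  suffices key : ∀ t ∈ Set.Icc (a ⊓ x) x, (a ⊔ t, b ⊔ t) ∈ S ↔ (a, b) ∈ S from
    key x ⟨inf_le_right, le_rfl⟩
  intro t ht
  refine (Set.finite_Icc (a ⊓ x) x).wellFoundedOn.induction (r := (· < ·)) ht
    (P := fun t => (a ⊔ t, b ⊔ t) ∈ S ↔ (a, b) ∈ S) fun t ht ih => ?_
  rcases ht.1.eq_or_lt with rfl | hlt
  · rw [sup_eq_left.2 inf_le_left, sup_eq_left.2 (inf_le_left.trans hab.le)]
  obtain ⟨t', ht'₁, ht'⟩ := exists_le_covBy_of_lt hlt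
  have hbt : ∀ {s}, s ≤ x → b ⊓ s ≤ a := fun hs => (inf_le_inf_left b hs).trans hbx
  have hstep := hS.mem_iff_sup_mem_of_covBy (hab.sup_right_of_inf_le (hbt (ht'.le.trans ht.2)))
    ht' le_sup_right <| by
      rw [sup_comm b, sup_inf_assoc_of_le b ht'.le, sup_comm a]
      exact sup_le_sup_left (hbt ht.2) t'
  rw [sup_assoc, sup_assoc, sup_eq_right.2 ht'.le] at hstep
  rw [← hstep, ih t' ⟨ht'₁, ht'.le.trans ht.2⟩ ht'.lt]

end CoverProjClosed

lemma Sim.of_map {L : Type*} [Lattice L] {S : Set (L × L)} {p q p' q' : L} (hpq : p ≤ q)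
    (hpq' : p' ≤ q') (f : L → L) (hp : f p = p') (hq : f q = q')
    (hf : ∀ a b, p ≤ a → a ⋖ b → b ≤ q → f a ⋖ f b ∧ ((a, b) ∈ S → (f a, f b) ∈ S))
    (h : Sim S p' q') : Sim S p q := by
  intro n c h0 hn hc i hi hmem
  rw [inf_eq_left.2 hpq] at h0
  rw [sup_eq_right.2 hpq] at hn
  have hbounds : ∀ j ≤ n, p ≤ c j ∧ c j ≤ q := fun j hj =>
    ⟨h0 ▸ le_of_covBy_path hc j.zero_le hj, hn ▸ le_of_covBy_path hc hj le_rfl⟩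
  have hfc : ∀ j < n, f (c j) ⋖ f (c (j + 1)) ∧ ((c j, c (j + 1)) ∈ S → _) := fun j hj =>
    hf _ _ (hbounds j hj.le).1 (hc j hj) (hbounds (j + 1) hj).2
  exact h n (f ∘ c) (by simp [h0, hp, hpq']) (by simp [hn, hq, hpq'])
    (fun j hj => (hfc j hj).1) i hi ((hfc i hi).2 hmem)

/-- `x ∼ (x ⊔ y)` iff `(x ⊓ y) ∼ y`. -/
theorem stmt5 {L : Type*} [Lattice L] [LocallyFiniteOrder L] [IsModularLattice L]
    (S : Set (L × L)) (hS : CoverProjClosed S) :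
    ∀ x y : L, Sim S x (x ⊔ y) ↔ Sim S (x ⊓ y) y := by
  intro x y
  constructor
  · refine Sim.of_map inf_le_right le_sup_left (· ⊔ x) (by simp) (sup_comm y x) ?_
    intro a b ha hab hb
    have hbx : b ⊓ x ≤ a := (inf_le_inf_right x hb).trans (inf_comm y x ▸ ha)
    exact ⟨hab.sup_right_of_inf_le hbx, (hS.sup_mem_iff_s5 hab hbx).2⟩
  · refine Sim.of_map le_sup_left inf_le_right (· ⊓ y) rfl (by simp) ?_
    intro a b ha hab hb
    have hcov := hab.inf_right_of_le_sup (hb.trans (sup_le_sup_right ha y))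
    have hrecover : ∀ {c}, x ≤ c → c ≤ x ⊔ y → c ⊓ y ⊔ x = c := fun hxc hcy => by
      rw [inf_sup_assoc_of_le y hxc, sup_comm y, inf_eq_left.2 hcy]
    have hbx : b ⊓ y ⊓ x ≤ a ⊓ y := by
      rw [inf_right_comm]
      exact inf_le_inf_right y (inf_le_right.trans ha)
    have := hS.sup_mem_iff_s5 hcov hbx
    rw [hrecover ha (hab.le.trans hb), hrecover (ha.trans hab.le) hb] at this
    exact ⟨hcov, this.1⟩
end

section
/- Let L be a locally finite modular lattice, let S be a set of covering pairs of L that is closed under cover-projectivity, and fix z ∈ L. Then the set C = {x ∈ L : x ∼ z} is a convex sublattice of L; that is, if x, y ∈ C then x ⊓ y ∈ C and x ⊔ y ∈ C, and if x, v ∈ C and x ≤ y ≤ v then y ∈ C. -/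
open Relation

section CovByChain

variable {α : Type*} [Preorder α] {n : ℕ} {c : ℕ → α}

theorem covBy_chain_mono (hc : ∀ i < n, c i ⋖ c (i + 1)) {i j : ℕ} (hij : i ≤ j) (hjn : j ≤ n) :
    c i ≤ c j := by
  induction j, hij using Nat.le_induction with
  | base => exact le_rfl
  | succ j hij ih => exact (ih (by omega)).trans (hc j (by omega)).le

theorem covBy_chain_snoc (hc : ∀ i < n, c i ⋖ c (i + 1)) {d : α} (hd : c n ⋖ d) :
    ∀ i < n + 1, Function.update c (n + 1) d i ⋖ Function.update c (n + 1) d (i + 1) := by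
  intro i hi
  rw [Function.update_of_ne (by omega)]
  rcases Nat.lt_succ_iff_lt_or_eq.mp hi with hi | rfl
  · rw [Function.update_of_ne (by omega)]
    exact hc i hi
  · rwa [Function.update_self]

theorem exists_covBy_chain_extend (hc : ∀ i < n, c i ⋖ c (i + 1)) {d : α}
    (hd : ReflTransGen (· ⋖ ·) (c n) d) :
    ∃ (m : ℕ) (c' : ℕ → α), n ≤ m ∧ (∀ i ≤ n, c' i = c i) ∧ c' m = d ∧
      ∀ i < m, c' i ⋖ c' (i + 1) := by
  induction hd with
  | refl => exact ⟨n, c, le_rfl, fun _ _ => rfl, rfl, hc⟩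
  | tail _ hd ih =>
    obtain ⟨m, c', hnm, hpre, hm, hc'⟩ := ih
    refine ⟨m + 1, Function.update c' (m + 1) _, by omega, fun i hi => ?_,
      Function.update_self .., covBy_chain_snoc hc' (hm ▸ hd)⟩
    rw [Function.update_of_ne (by omega), hpre i hi]

end CovByChain

def CoversAvoid {α : Type*} [Preorder α] (S : Set (α × α)) (a b : α) : Prop :=
  ∀ u v : α, a ≤ u → v ≤ b → u ⋖ v → (u, v) ∉ S

section CoversAvoid

variable {α : Type*} [Preorder α] {S : Set (α × α)} {a b a' b' : α}

theorem CoversAvoid.mono (h : CoversAvoid S a b) (ha : a ≤ a') (hb : b' ≤ b) :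
    CoversAvoid S a' b' :=
  fun u v hu hv => h u v (ha.trans hu) (hv.trans hb)

theorem coversAvoid_self (S : Set (α × α)) (a : α) : CoversAvoid S a a :=
  fun _ _ hu hv huv => absurd (hv.trans hu) huv.lt.not_ge

end CoversAvoid

theorem sim_iff_coversAvoid {L : Type*} [Lattice L] [LocallyFiniteOrder L] {S : Set (L × L)}
    {x y : L} : Sim S x y ↔ CoversAvoid S (x ⊓ y) (x ⊔ y) := by
  constructor
  · intro hsim u v hu hv huv hmem
    obtain ⟨m, c, -, hc0, hcm, hc⟩ := exists_covBy_chain_extend (n := 0) (c := fun _ => x ⊓ y)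
      (by simp) (le_iff_reflTransGen_covBy.mp hu)
    obtain ⟨k, c', hk, hpre, hc'k, hc'⟩ := exists_covBy_chain_extend
      (covBy_chain_snoc hc (hcm ▸ huv)) (by simpa using le_iff_reflTransGen_covBy.mp hv)
    refine hsim k c' ?_ hc'k hc' m (by omega) ?_
    · rw [hpre 0 (by omega), Function.update_of_ne (by omega), hc0 0 le_rfl]
    · rwa [hpre m (by omega), hpre (m + 1) le_rfl, Function.update_self,
        Function.update_of_ne (by omega), hcm]
  · intro h n c h0 hn hc i hi
    exact h _ _ (h0 ▸ covBy_chain_mono hc (Nat.zero_le i) hi.le)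
      (hn ▸ covBy_chain_mono hc hi le_rfl) (hc i hi)

namespace CoverProjClosed

variable {L : Type*} [Lattice L] [IsModularLattice L] {S : Set (L × L)}

theorem mem_iff_of_inf_covBy (hS : CoverProjClosed S) {x y : L} (hne : x ≠ y)
    (hx : x ⊓ y ⋖ x) (hy : x ⊓ y ⋖ y) : (x ⊓ y, y) ∈ S ↔ (x, x ⊔ y) ∈ S :=
  (hS x y hne hx hy (covBy_sup_of_inf_covBy_right hy) (covBy_sup_of_inf_covBy_left hx)).2

variable [LocallyFiniteOrder L]

/- Walk up a covering chain from `w ⊓ b` to `w`: consecutive quotients `t ⋖ t ⊔ b` and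
`t' ⋖ t' ⊔ b` along it are opposite sides of a diamond, to which cover-projectivity applies. -/
theorem mem_iff_of_covBy_sup (hS : CoverProjClosed S) {w b : L} (h : w ⋖ w ⊔ b) :
    (w ⊓ b, b) ∈ S ↔ (w, w ⊔ b) ∈ S := by
  set a := w ⊓ b
  have hab : a ⋖ b := inf_covBy_of_covBy_sup_left h
  suffices ∀ t, ReflTransGen (· ⋖ ·) a t → t ⊓ b = a → ((a, b) ∈ S ↔ (t, t ⊔ b) ∈ S) from
    this w (le_iff_reflTransGen_covBy.mp inf_le_left) rfl
  intro t ht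
  induction ht with
  | refl => intro; rw [sup_eq_right.mpr hab.le]
  | @tail t t' hat htt' ih =>
    intro ht'b
    have htb : t ⊓ b = a := le_antisymm (ht'b ▸ inf_le_inf_right b htt'.le)
      (le_inf (le_iff_reflTransGen_covBy.mpr hat) hab.le)
    have hm : t' ⊓ (t ⊔ b) = t := by
      rw [inf_comm, sup_inf_assoc_of_le b htt'.le, inf_comm, ht'b, ← htb, sup_inf_self]
    have hne : t' ≠ t ⊔ b := fun e => hab.ne (by rw [← ht'b, e, inf_eq_right.mpr le_sup_right])
    have hcov : t ⋖ t ⊔ b := covBy_sup_of_inf_covBy_right (htb ▸ hab)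
    have hstep := hS.mem_iff_of_inf_covBy hne (by rwa [hm]) (by rwa [hm])
    rw [hm, ← sup_assoc, sup_eq_left.mpr htt'.le] at hstep
    exact (ih htb).trans hstep

/- A cover `u ⋖ v` is perspective to `u ⊔ b ⋖ v ⊔ b` if `v ⊓ b ≤ u`, and to `u ⊓ b ⋖ v ⊓ b`
otherwise. -/
theorem coversAvoid_of_inf_of_sup (hS : CoverProjClosed S) {a b c : L}
    (hinf : CoversAvoid S (a ⊓ b) (c ⊓ b)) (hsup : CoversAvoid S (a ⊔ b) (c ⊔ b)) :
    CoversAvoid S a c := by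
  intro u v hau hvc huv hmem
  by_cases h : v ⊓ b ≤ u
  · have hm : (u ⊔ b) ⊓ v = u := by
      rw [sup_inf_assoc_of_le b huv.le, inf_comm, sup_eq_left.mpr h]
    have hcov : u ⊔ b ⋖ u ⊔ b ⊔ v := covBy_sup_of_inf_covBy_right (by rwa [hm])
    have htr := hS.mem_iff_of_covBy_sup hcov
    rw [hm, sup_right_comm, sup_eq_right.mpr huv.le] at htr
    rw [sup_right_comm, sup_eq_right.mpr huv.le] at hcov
    exact hsup _ _ (sup_le_sup_right hau b) (sup_le_sup_right hvc b) hcov (htr.mp hmem)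
  · have hj : u ⊔ v ⊓ b = v :=
      (huv.eq_or_eq le_sup_left (sup_le huv.le inf_le_left)).resolve_left
        fun e => h (sup_eq_left.mp e)
    have hm : u ⊓ (v ⊓ b) = u ⊓ b := by rw [← inf_assoc, inf_eq_left.mpr huv.le]
    have hcov : u ⋖ u ⊔ v ⊓ b := hj.symm ▸ huv
    have htr := hS.mem_iff_of_covBy_sup hcov
    have hcov' := inf_covBy_of_covBy_sup_left hcov
    rw [hm, hj] at htr
    rw [hm] at hcov'
    exact hinf _ _ (inf_le_inf_right b hau) (inf_le_inf_right b hvc) hcov' (htr.mpr hmem)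

theorem coversAvoid_trans (hS : CoverProjClosed S) {a b c : L} (hab : a ≤ b) (hbc : b ≤ c)
    (h₁ : CoversAvoid S a b) (h₂ : CoversAvoid S b c) : CoversAvoid S a c :=
  hS.coversAvoid_of_inf_of_sup (b := b)
    (by rwa [inf_eq_left.mpr hab, inf_eq_right.mpr hbc])
    (by rwa [sup_eq_right.mpr hab, sup_eq_left.mpr hbc])

theorem coversAvoid_inf_iff_coversAvoid_sup (hS : CoverProjClosed S) (a b : L) :
    CoversAvoid S (a ⊓ b) b ↔ CoversAvoid S a (a ⊔ b) := by
  constructor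
  · intro h
    refine hS.coversAvoid_of_inf_of_sup (b := b) ?_ ?_
    · rwa [inf_eq_right.mpr (le_sup_right : b ≤ a ⊔ b)]
    · rw [sup_assoc, sup_idem]
      exact coversAvoid_self S _
  · intro h
    refine hS.coversAvoid_of_inf_of_sup (b := a) ?_ ?_
    · rw [inf_right_comm, inf_idem, inf_comm b a]
      exact coversAvoid_self S _
    · rwa [sup_eq_right.mpr (inf_le_left : a ⊓ b ≤ a), sup_comm]

theorem coversAvoid_inf (hS : CoverProjClosed S) {a b c : L} (ha : CoversAvoid S a c)
    (hb : CoversAvoid S b c) (hac : a ≤ c) (hbc : b ≤ c) : CoversAvoid S (a ⊓ b) c :=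
  hS.coversAvoid_trans inf_le_right hbc
    ((hS.coversAvoid_inf_iff_coversAvoid_sup a b).mpr (ha.mono le_rfl (sup_le hac hbc))) hb

theorem coversAvoid_sup (hS : CoverProjClosed S) {a b c : L} (ha : CoversAvoid S c a)
    (hb : CoversAvoid S c b) (hca : c ≤ a) (hcb : c ≤ b) : CoversAvoid S c (a ⊔ b) :=
  hS.coversAvoid_trans hca le_sup_left ha
    ((hS.coversAvoid_inf_iff_coversAvoid_sup a b).mp (hb.mono (le_inf hca hcb) le_rfl))

theorem sim_iff (hS : CoverProjClosed S) {x z : L} :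
    Sim S x z ↔ CoversAvoid S (x ⊓ z) z ∧ CoversAvoid S z (x ⊔ z) := by
  rw [sim_iff_coversAvoid]
  exact ⟨fun h => ⟨h.mono le_rfl le_sup_right, h.mono inf_le_right le_rfl⟩,
    fun h => hS.coversAvoid_trans inf_le_right le_sup_right h.1 h.2⟩

end CoverProjClosed

/-- The equivalence class `{x | x ∼ z}` is a convex sublattice of `L`. -/
theorem stmt6 {L : Type*} [Lattice L] [LocallyFiniteOrder L] [IsModularLattice L]
    (S : Set (L × L)) (hS : CoverProjClosed S) (z : L) :
    (∀ x y : L, Sim S x z → Sim S y z → Sim S (x ⊓ y) z ∧ Sim S (x ⊔ y) z) ∧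
    (∀ x y v : L, Sim S x z → Sim S v z → x ≤ y → y ≤ v → Sim S y z) := by
  simp only [hS.sim_iff]
  refine ⟨fun x y hx hy => ⟨⟨?_, ?_⟩, ⟨?_, ?_⟩⟩, fun x y v hx hv hxy hyv => ⟨?_, ?_⟩⟩
  · rw [inf_inf_distrib_right]
    exact hS.coversAvoid_inf hx.1 hy.1 inf_le_right inf_le_right
  · exact hx.2.mono le_rfl (sup_le_sup_right inf_le_left z)
  · exact hx.1.mono (inf_le_inf_right z le_sup_left) le_rfl
  · rw [sup_sup_distrib_right]
    exact hS.coversAvoid_sup hx.2 hy.2 le_sup_right le_sup_right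
  · exact hx.1.mono (inf_le_inf_right z hxy) le_rfl
  · exact hv.2.mono le_rfl (sup_le_sup_right hyv z)
end

section
/- Let L be a locally finite modular lattice with least element ⊥, let w be a projective-constant weighting on L, and let r be an integer such that (w, r) satisfies the differential condition on L. Define x ∼ y to hold if and only if every covering path from x ⊓ y to x ⊔ y contains no covering pair (u, v) with w(u, v) = 0. Then for every x ∈ L with x ∼ ⊥, the truncated differential equation holds: (∑_{y ⋖ x, y ∼ ⊥} w(y, x)) + r = ∑_{z : x ⋖ z, z ∼ ⊥} w(x, z). -/
open scoped BigOperators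

/-- `SimW w x y` holds iff every covering path from `x ⊓ y` to `x ⊔ y` contains no covering
pair `(u, v)` with `w u v = 0`. -/
def SimW {L : Type*} [Lattice L] (w : L → L → ℤ) (x y : L) : Prop :=
  ∀ (n : ℕ) (c : ℕ → L), c 0 = x ⊓ y → c n = x ⊔ y → (∀ i < n, c i ⋖ c (i + 1)) →
    ∀ i < n, w (c i) (c (i + 1)) ≠ 0

/-!
Write `x ∼ ⊥` for `SimW w x ⊥`: every covering path from `⊥` to `x` has nonzero weights.
Since covering paths from `⊥` exist in a locally finite order, `x ∼ ⊥` holds iff every lower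
cover `y ⋖ x` satisfies `y ∼ ⊥` and `w y x ≠ 0`. Hence on the `∼`-class of `⊥` the truncated
lower sum is the full one. For the upper sum, if `x ∼ ⊥`, `x ⋖ z` and `w x z ≠ 0`, then `z ∼ ⊥`:
any other lower cover `y` of `z` forms a covering square with `x` over `x ⊓ y` (modularity), and
projective constancy transports the nonzero weights `w (x ⊓ y) x` and `w x z` to the opposite
sides `w y z` and `w (x ⊓ y) y`; induction on `z` does the rest. So the covers dropped from the
upper sum all carry weight `0`, and the truncated equation is the differential condition at `x`.
-/

open Function

section CoveringPath

variable {L : Type*} [PartialOrder L]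

lemma covBy_path_update {c : ℕ → L} {n : ℕ} {b : L} (hc : ∀ i < n, c i ⋖ c (i + 1))
    (hb : c n ⋖ b) : ∀ i < n + 1, update c (n + 1) b i ⋖ update c (n + 1) b (i + 1) := by
  intro i hi
  rcases Nat.lt_succ_iff_lt_or_eq.mp hi with hi | rfl
  · simpa [update_of_ne (by omega : i ≠ n + 1), update_of_ne (by omega : i + 1 ≠ n + 1)]
      using hc i hi
  · simpa [update_of_ne (by omega : i ≠ i + 1)] using hb

variable [LocallyFiniteOrder L]

lemma exists_covBy_path {a b : L} (hab : a ≤ b) :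
    ∃ (n : ℕ) (c : ℕ → L), c 0 = a ∧ c n = b ∧ ∀ i < n, c i ⋖ c (i + 1) := by
  have hpath := le_iff_reflTransGen_covBy.mp hab
  clear hab
  induction hpath with
  | refl => exact ⟨0, fun _ => a, rfl, rfl, by simp⟩
  | tail _ hbd ih =>
    obtain ⟨n, c, hc0, hcn, hc⟩ := ih
    exact ⟨n + 1, update c (n + 1) _, by simp [hc0], by simp, covBy_path_update hc (hcn ▸ hbd)⟩

lemma wellFoundedLT_of_orderBot [OrderBot L] : WellFoundedLT L :=
  StrictMono.wellFoundedLT (f := fun z : L => Finset.Icc ⊥ z)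
    fun _ _ h => Finset.Icc_ssubset_Icc_right (bot_le.trans h.le) le_rfl h

end CoveringPath

section SimW

variable {L : Type*} [Lattice L] [OrderBot L] {w : L → L → ℤ} {x y : L}

lemma simW_bot_iff : SimW w x ⊥ ↔ ∀ (n : ℕ) (c : ℕ → L), c 0 = ⊥ → c n = x →
    (∀ i < n, c i ⋖ c (i + 1)) → ∀ i < n, w (c i) (c (i + 1)) ≠ 0 := by
  simp only [SimW, inf_bot_eq, sup_bot_eq]

lemma SimW.weight_ne_zero_of_path (hx : SimW w x ⊥) (hyx : y ⋖ x) {n : ℕ} {c : ℕ → L}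
    (h0 : c 0 = ⊥) (hn : c n = y) (hc : ∀ i < n, c i ⋖ c (i + 1)) :
    (∀ i < n, w (c i) (c (i + 1)) ≠ 0) ∧ w y x ≠ 0 := by
  have hext := simW_bot_iff.mp hx (n + 1) (update c (n + 1) x) (by simp [h0]) (by simp)
    (covBy_path_update hc (hn ▸ hyx))
  refine ⟨fun i hi => ?_, ?_⟩
  · simpa [update_of_ne (by omega : i ≠ n + 1), update_of_ne (by omega : i + 1 ≠ n + 1)]
      using hext i (by omega)
  · simpa [update_of_ne (by omega : n ≠ n + 1), hn] using hext n (by omega)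

lemma simW_bot_iff_forall_covBy [LocallyFiniteOrder L] :
    SimW w x ⊥ ↔ ∀ y, y ⋖ x → w y x ≠ 0 ∧ SimW w y ⊥ := by
  refine ⟨fun hx y hyx => ⟨?_, simW_bot_iff.mpr fun n c h0 hn hc =>
    (hx.weight_ne_zero_of_path hyx h0 hn hc).1⟩, fun h => simW_bot_iff.mpr ?_⟩
  · obtain ⟨n, c, h0, hn, hc⟩ := exists_covBy_path (bot_le : ⊥ ≤ y)
    exact (hx.weight_ne_zero_of_path hyx h0 hn hc).2
  · rintro (_ | n) c h0 hn hc i hi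
    · omega
    obtain ⟨hw, hy⟩ := h (c n) (hn ▸ hc n n.lt_succ_self)
    rcases Nat.lt_succ_iff_lt_or_eq.mp hi with hi | rfl
    · exact simW_bot_iff.mp hy n c h0 rfl (fun j hj => hc j (by omega)) i hi
    · rwa [hn]

lemma SimW.bot_of_covBy_of_weight_ne_zero [LocallyFiniteOrder L] [IsWeakLowerModularLattice L]
    (hproj : ProjConst w) {z : L} (hx : SimW w x ⊥) (hxz : x ⋖ z) (hw : w x z ≠ 0) :
    SimW w z ⊥ := by
  have := wellFoundedLT_of_orderBot (L := L)
  induction z using WellFoundedLT.induction generalizing x with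
  | _ z ih =>
  refine simW_bot_iff_forall_covBy.mpr fun y hyz => ?_
  by_cases hxy : x = y
  · subst hxy
    exact ⟨hw, hx⟩
  have hsup : x ⊔ y = z := hxz.wcovBy.sup_eq hyz.wcovBy hxy
  rw [← hsup] at hxz hyz hw ⊢
  have hmx : x ⊓ y ⋖ x := inf_covBy_of_covBy_sup_of_covBy_sup_left hxz hyz
  have hmy : x ⊓ y ⋖ y := inf_covBy_of_covBy_sup_of_covBy_sup_right hxz hyz
  obtain ⟨hwx, hwy⟩ := hproj x y hxy hmx hmy hxz hyz
  obtain ⟨hwm, hm⟩ := simW_bot_iff_forall_covBy.mp hx _ hmx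
  exact ⟨hwx ▸ hwm, ih y (hsup ▸ hyz.lt) hm hmy (hwy ▸ hw)⟩

end SimW

/-- The truncated differential equation holds on the `∼`-class of `⊥`. -/
theorem stmt7 {L : Type*} [Lattice L] [LocallyFiniteOrder L] [IsModularLattice L]
    [OrderBot L]
    (w : L → L → ℤ) (hproj : ProjConst w) (r : ℤ) (hdiff : DiffCond w r) :
    ∀ x : L, SimW w x ⊥ →
      (∑ᶠ y ∈ {y | y ⋖ x ∧ SimW w y ⊥}, w y x) + r =
        ∑ᶠ z ∈ {z | x ⋖ z ∧ SimW w z ⊥}, w x z := by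
  intro x hx
  have hlower : {y | y ⋖ x ∧ SimW w y ⊥} = {y | y ⋖ x} :=
    Set.ext fun y => and_iff_left_of_imp fun hyx => (simW_bot_iff_forall_covBy.mp hx y hyx).2
  have hupper : ∑ᶠ z ∈ {z | x ⋖ z ∧ SimW w z ⊥}, w x z = ∑ᶠ z ∈ {z | x ⋖ z}, w x z :=
    finsum_mem_inter_support_eq' _ _ _ fun z hz =>
      and_iff_left_of_imp fun hxz => hx.bot_of_covBy_of_weight_ne_zero hproj hxz hz
  rw [hlower, hupper]
  exact (hdiff x).2.2
end

section
/- Let P be a finitary unique-cover-modular poset, let w : P → ℤ take only positive values, and let r be an integer such that (w, r) satisfies the ideal-differential condition on P. Let p ∈ P. Then: (1) for every a with p ⋖ a and every b ≠ p with b ⋖ a, we have b ∈ Sₚ, and dually, for every a with a ⋖ p and every b ≠ p with a ⋖ b, we have b ∈ Sₚ; and (2) for every x ∈ Sₚ there is exactly one b ∈ P with p ⋖ b and x < b, and exactly one c ∈ P with c ⋖ p and c < x. -/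
open scoped BigOperators

/-- A poset is finitary if every principal lower set is finite. -/
def Finitary (P : Type*) [PartialOrder P] : Prop :=
  ∀ x : P, {y : P | y ≤ x}.Finite

/-- A poset is unique-cover-modular if any two distinct elements covering a common
element, or covered by a common element, are covered by a unique common element and
cover a unique common element. -/
def UCM (P : Type*) [PartialOrder P] : Prop :=
  ∀ x y : P, x ≠ y →
    ((∃ a, a ⋖ x ∧ a ⋖ y) ∨ (∃ b, x ⋖ b ∧ y ⋖ b)) →
    (∃! a, a ⋖ x ∧ a ⋖ y) ∧ (∃! b, x ⋖ b ∧ y ⋖ b)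

/-- The set of maximal elements of a subset `I` of a poset. -/
def maxIn {P : Type*} [PartialOrder P] (I : Set P) : Set P :=
  {a | a ∈ I ∧ ∀ b ∈ I, a ≤ b → b = a}

/-- The set of minimal elements of a subset `I` of a poset. -/
def minIn {P : Type*} [PartialOrder P] (I : Set P) : Set P :=
  {a | a ∈ I ∧ ∀ b ∈ I, b ≤ a → b = a}

/-- `(w, r)` satisfies the ideal-differential condition on `P`: for every finite lower set
`I`, the set of minimal elements of the complement is finite and
`(∑_{a maximal in I} w a) + r = ∑_{b minimal in P ∖ I} w b`. -/
def IdealDiff {P : Type*} [PartialOrder P] (w : P → ℤ) (r : ℤ) : Prop :=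
  ∀ I : Set P, I.Finite → IsLowerSet I →
    (minIn Iᶜ).Finite ∧ ((∑ᶠ a ∈ maxIn I, w a) + r = ∑ᶠ b ∈ minIn Iᶜ, w b)

/-- `Sset p` is the set of siblings of `p`: elements `x ≠ p` with `a < x < b` for some
`a ⋖ p` and `p ⋖ b`. -/
def Sset {P : Type*} [PartialOrder P] (p : P) : Set P :=
  {x | x ≠ p ∧ ∃ a b : P, a ⋖ p ∧ p ⋖ b ∧ a < x ∧ x < b}

/-- Key structural lemma: in a finitary UCM poset, if `a ⋖ p ⋖ b` then every element
`x` strictly between `a` and `b` satisfies `a ⋖ x` and `x ⋖ b`.  Proved by strong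
induction on the size of the principal lower set of the top element. -/
private lemma coverChain {P : Type*} [PartialOrder P]
    (hfin : Finitary P) (hucm : UCM P) :
    ∀ n : ℕ, ∀ b : P, (hfin b).toFinset.card ≤ n →
      ∀ a p x : P, a ⋖ p → p ⋖ b → a < x → x < b → a ⋖ x ∧ x ⋖ b := by
  intro n
  induction n with
  | zero =>
      intro b hb a p x _ _ _ _
      exfalso
      have hbmem : b ∈ (hfin b).toFinset := (Set.Finite.mem_toFinset _).2 le_rfl
      have := Finset.card_pos.mpr ⟨b, hbmem⟩
      omega
  | succ n IH =>
      intro b hb a p x hap hpb hax hxb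
      by_cases hxp : x = p
      · subst hxp; exact ⟨hap, hpb⟩
      have hcard : ∀ z : P, z < b → (hfin z).toFinset.card ≤ n := by
        intro z hz
        have hsub : (hfin z).toFinset ⊆ (hfin b).toFinset := by
          intro y hy
          rw [Set.Finite.mem_toFinset] at hy ⊢
          exact le_trans hy hz.le
        have hlt : (hfin z).toFinset.card < (hfin b).toFinset.card :=
          Finset.card_lt_card ((Finset.ssubset_iff_of_subset hsub).2
            ⟨b, (Set.Finite.mem_toFinset _).2 le_rfl, by
              rw [Set.Finite.mem_toFinset]; exact fun h => hz.not_ge h⟩)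
        omega
      -- Step 1 : x ⋖ b
      have hxcb : x ⋖ b := by
        by_contra hxbn
        have hsfin : ({y : P | x ≤ y ∧ y < b}).Finite :=
          (hfin b).subset fun y hy => hy.2.le
        obtain ⟨z, hzmem, hzmax⟩ := hsfin.toFinset.exists_maximal
          ⟨x, (Set.Finite.mem_toFinset _).2 ⟨le_rfl, hxb⟩⟩
        rw [Set.Finite.mem_toFinset] at hzmem
        obtain ⟨hxz, hzb⟩ := hzmem
        have hzcov : z ⋖ b := by
          refine ⟨hzb, fun c hzc hcb => ?_⟩
          exact hzc.not_ge (hzmax ((Set.Finite.mem_toFinset _).2 ⟨hxz.trans hzc.le, hcb⟩) hzc.le)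
        have hxz' : x < z := lt_of_le_of_ne hxz fun h => hxbn (h ▸ hzcov)
        have hzp : z ≠ p := fun h => hap.2 hax (h ▸ hxz')
        obtain ⟨⟨u, ⟨huz, hup⟩, -⟩, -⟩ := hucm z p hzp (Or.inr ⟨b, hzcov, hpb⟩)
        have hau : a ≠ u := fun h => (h ▸ huz).2 hax hxz'
        obtain ⟨⟨v, ⟨hva, hvu⟩, -⟩, -⟩ := hucm a u hau (Or.inr ⟨p, hap, hup⟩)
        obtain ⟨hvx, -⟩ := IH z (hcard z hzb) v u x hvu huz (hva.lt.trans hax) hxz'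
        exact hvx.2 hva.lt hax
      -- Step 2 : a ⋖ x
      by_cases hax2 : a ⋖ x
      · exact ⟨hax2, hxcb⟩
      exfalso
      have hsfin : ({y : P | a < y ∧ y ≤ x}).Finite :=
        (hfin x).subset fun y hy => hy.2
      obtain ⟨y, hymem, hymin⟩ := hsfin.toFinset.exists_minimal
        ⟨x, (Set.Finite.mem_toFinset _).2 ⟨hax, le_rfl⟩⟩
      rw [Set.Finite.mem_toFinset] at hymem
      obtain ⟨hay, hyx⟩ := hymem
      have haycov : a ⋖ y := by
        refine ⟨hay, fun c hac hcy => ?_⟩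
        exact hcy.not_ge (hymin ((Set.Finite.mem_toFinset _).2 ⟨hac, hcy.le.trans hyx⟩) hcy.le)
      have hyx' : y < x := lt_of_le_of_ne hyx fun h => hax2 (h ▸ haycov)
      obtain ⟨⟨u, ⟨hux, hup⟩, -⟩, -⟩ := hucm x p hxp (Or.inr ⟨b, hxcb, hpb⟩)
      have hau : a ≠ u := fun h => hax2 (h ▸ hux)
      obtain ⟨⟨v, ⟨hva, hvu⟩, -⟩, -⟩ := hucm a u hau (Or.inr ⟨p, hap, hup⟩)
      obtain ⟨hvy, -⟩ := IH x (hcard x hxcb.lt) v u y hvu hux (hva.lt.trans hay) hyx'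
      exact hvy.2 hva.lt hay

/-- Local structure of the neighborhood of a point `p`. -/
theorem stmt10 {P : Type*} [PartialOrder P]
    (hfin : Finitary P) (hucm : UCM P)
    (w : P → ℤ) (hw : ∀ x : P, 0 < w x)
    (r : ℤ) (hdiff : IdealDiff w r) (p : P) :
    ((∀ a : P, p ⋖ a → ∀ b : P, b ≠ p → b ⋖ a → b ∈ Sset p) ∧
     (∀ a : P, a ⋖ p → ∀ b : P, b ≠ p → a ⋖ b → b ∈ Sset p)) ∧
    (∀ x ∈ Sset p, (∃! b : P, p ⋖ b ∧ x < b) ∧ (∃! c : P, c ⋖ p ∧ c < x)) := by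
  have key : ∀ a p b x : P, a ⋖ p → p ⋖ b → a < x → x < b → a ⋖ x ∧ x ⋖ b :=
    fun a p b x hap hpb hax hxb =>
      coverChain hfin hucm ((hfin b).toFinset.card) b le_rfl a p x hap hpb hax hxb
  constructor
  · constructor
    · intro a hpa b hbp hba
      obtain ⟨⟨u, ⟨hub, hup⟩, -⟩, -⟩ := hucm b p hbp (Or.inr ⟨a, hba, hpa⟩)
      exact ⟨hbp, u, a, hup, hpa, hub.lt, hba.lt⟩
    · intro a hap b hbp hab
      obtain ⟨-, ⟨t, ⟨hbt, hpt⟩, -⟩⟩ := hucm b p hbp (Or.inl ⟨a, hab, hap⟩)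
      exact ⟨hbp, a, t, hap, hpt, hab.lt, hbt.lt⟩
  · rintro x ⟨hxp, a, b, hap, hpb, hax, hxb⟩
    constructor
    · refine ⟨b, ⟨hpb, hxb⟩, ?_⟩
      rintro b' ⟨hpb', hxb'⟩
      have h1 := (key a p b' x hap hpb' hax hxb').2
      have h2 := (key a p b x hap hpb hax hxb).2
      by_cases h : b' = b
      · exact h
      obtain ⟨⟨c, -, hcu⟩, -⟩ := hucm b' b h (Or.inl ⟨p, hpb', hpb⟩)
      have e1 : x = c := hcu x ⟨h1, h2⟩
      have e2 : p = c := hcu p ⟨hpb', hpb⟩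
      exact absurd (e1.trans e2.symm) hxp
    · refine ⟨a, ⟨hap, hax⟩, ?_⟩
      rintro c ⟨hcp, hcx⟩
      have h1 := (key c p b x hcp hpb hcx hxb).1
      have h2 := (key a p b x hap hpb hax hxb).1
      by_cases h : c = a
      · exact h
      obtain ⟨-, ⟨t, -, htu⟩⟩ := hucm c a h (Or.inr ⟨p, hcp, hap⟩)
      have e1 : x = t := htu x ⟨h1, h2⟩
      have e2 : p = t := htu p ⟨hcp, hap⟩
      exact absurd (e1.trans e2.symm) hxp
end

section
/- Let P be a finitary unique-cover-modular poset, let w : P → ℤ take only positive values, and let r be an integer such that (w, r) satisfies the ideal-differential condition on P. Let p ∈ P and x, y ∈ Sₚ. If there exists a ∈ P with a ⋖ p, a < x and a < y, and there exists b ∈ P with p ⋖ b, x < b and y < b, then x = y. -/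
open scoped BigOperators

/-!
In a finitary unique-cover-modular poset the height grows by one along every cover, since two
lower covers of an element share a lower cover; hence `a ⋖ x ⋖ b` and `a ⋖ y ⋖ b`.
Subtracting the ideal-differential identities for a finite lower set `I` and for `I ∪ {m}`, with
`m` minimal outside `I`, expresses the weight of the elements that become minimal outside as
`2 w m` minus the weight of the maximal elements of `I` below `m`. For `I = Iio x ∪ Iio y`,
adding `x` frees the same elements whether or not `y` was added first, because the only common
cover `b` of `x` and `y` lies above `p ∉ I ∪ {x, y}`. So the maximal elements of `I` below both
`x` and `y` have total weight `0`, which is impossible as `a` is one of them.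
-/

open Order

section Height

variable {P : Type*} [PartialOrder P]

namespace Finitary

lemma height_lt_top (hfin : Finitary P) (x : P) : height x < ⊤ := by
  refine (height_le (n := (hfin x).toFinset.card) fun p hp => ?_).trans_lt (ENat.natCast_lt_top _)
  have hcard := Finset.card_le_card_of_injOn (s := Finset.univ) p
    (fun i _ => (hfin x).mem_toFinset.2 (hp ▸ p.monotone (Fin.le_last i)))
    p.strictMono.injective.injOn
  rw [Finset.card_univ, Fintype.card_fin] at hcard
  exact_mod_cast (Nat.lt_of_succ_le hcard).le

lemma wellFoundedLT (hfin : Finitary P) : WellFoundedLT P :=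
  StrictMono.wellFoundedLT (f := height) fun _ _ h => height_strictMono h (hfin.height_lt_top _)

lemma exists_le_covBy (hfin : Finitary P) {a b : P} (h : a < b) : ∃ c, a ≤ c ∧ c ⋖ b := by
  have hS : {z : P | a ≤ z ∧ z < b}.Finite := (hfin b).subset fun z hz => hz.2.le
  obtain ⟨c, hc, hmax⟩ := hS.exists_maximalFor id _ ⟨a, le_rfl, h⟩
  exact ⟨c, hc.1, hc.2, fun u hu hub => hu.not_ge (hmax ⟨hc.1.trans hu.le, hub⟩ hu.le)⟩

lemma covBy_of_height_le (hfin : Finitary P) {u v : P} (huv : u < v)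
    (h : height v ≤ height u + 1) : u ⋖ v :=
  ⟨huv, fun y huy hyv =>
    ((height_add_one_le huy).trans_lt (height_strictMono hyv (hfin.height_lt_top y))).not_ge h⟩

end Finitary

namespace UCM

theorem height_eq_add_one_of_covBy (hucm : UCM P) (hfin : Finitary P) {u v : P} (huv : u ⋖ v) :
    height v = height u + 1 := by
  have := hfin.wellFoundedLT
  induction v using WellFoundedLT.induction generalizing u with
  | _ v ih =>
  -- two distinct lower covers of `v` share a lower cover, so they have the same height
  have hcov : ∀ c, c ⋖ v → height c = height u := by
    intro c hcv
    by_cases hcu : c = u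
    · rw [hcu]
    obtain ⟨⟨d, ⟨hdc, hdu⟩, -⟩, -⟩ := hucm c u hcu (Or.inr ⟨v, hcv, huv⟩)
    rw [ih c hcv.lt hdc, ih u huv.lt hdu]
  refine le_antisymm ?_ (height_add_one_le huv.lt)
  rw [height_eq_iSup_lt_height]
  refine iSup₂_le fun y hyv => ?_
  obtain ⟨c, hyc, hcv⟩ := hfin.exists_le_covBy hyv
  rw [← hcov c hcv]
  gcongr

theorem covBy_and_covBy_of_lt_of_lt (hucm : UCM P) (hfin : Finitary P) {a p b x : P}
    (hap : a ⋖ p) (hpb : p ⋖ b) (hax : a < x) (hxb : x < b) : a ⋖ x ∧ x ⋖ b := by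
  have hb : height b = height a + 1 + 1 := by
    rw [hucm.height_eq_add_one_of_covBy hfin hpb, hucm.height_eq_add_one_of_covBy hfin hap]
  refine ⟨hfin.covBy_of_height_le hax ?_, hfin.covBy_of_height_le hxb ?_⟩
  · exact (WithTop.add_le_add_iff_right ENat.one_ne_top).1 ((height_add_one_le hxb).trans hb.le)
  · rw [hb]
    gcongr
    exact height_add_one_le hax

end UCM

end Height

section LowerSet

variable {P : Type*} [PartialOrder P] {I : Set P} {m : P}

lemma mem_of_lt_of_mem_minIn_compl (hm : m ∈ minIn Iᶜ) {u : P} (hu : u < m) : u ∈ I := by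
  by_contra h
  exact hu.ne (hm.2 u h hu.le)

lemma IsLowerSet.insert_of_mem_minIn_compl (hI : IsLowerSet I) (hm : m ∈ minIn Iᶜ) :
    IsLowerSet (insert m I) := by
  rintro u v hvu (rfl | hu)
  · rcases hvu.eq_or_lt with rfl | hlt
    · exact Set.mem_insert _ _
    · exact Or.inr (mem_of_lt_of_mem_minIn_compl hm hlt)
  · exact Or.inr (hI hvu hu)

lemma maxIn_insert (hI : IsLowerSet I) (hm : m ∉ I) :
    maxIn (insert m I) = insert m (maxIn I \ Set.Iio m) := by
  ext z
  constructor
  · rintro ⟨rfl | hzI, hmax⟩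
    · exact Or.inl rfl
    · refine Or.inr ⟨⟨hzI, fun d hd hzd => hmax d (Or.inr hd) hzd⟩, fun hzm => ?_⟩
      exact hzm.ne' (hmax m (Set.mem_insert m I) hzm.le)
  · rintro (rfl | ⟨⟨hzI, hzmax⟩, hzm⟩)
    · refine ⟨Set.mem_insert z I, fun d hd hzd => ?_⟩
      rcases hd with rfl | hdI
      · rfl
      · exact absurd (hI hzd hdI) hm
    · refine ⟨Or.inr hzI, fun d hd hzd => ?_⟩
      rcases hd with rfl | hdI
      · exact absurd (hzd.lt_of_ne fun h => hm (h ▸ hzI)) hzm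
      · exact hzmax d hdI hzd

/-- The elements that become minimal in the complement when `m` is added to `I`. -/
def newMinIn (I : Set P) (m : P) : Set P :=
  {z | m ⋖ z ∧ ∀ u, u < z → u ∈ insert m I}

lemma minIn_compl_insert (hI : IsLowerSet I) (hm : m ∈ minIn Iᶜ) :
    minIn (insert m I)ᶜ = (minIn Iᶜ \ {m}) ∪ newMinIn I m := by
  ext z
  constructor
  · rintro ⟨hzc, hzmin⟩
    have hzI : z ∉ I := fun h => hzc (Or.inr h)
    have hbelow : ∀ u, u < z → u ∈ insert m I := fun u hu => by
      by_contra h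
      exact hu.ne (hzmin u h hu.le)
    by_cases hz : ∀ u ∈ Iᶜ, u ≤ z → u = z
    · exact Or.inl ⟨⟨hzI, hz⟩, fun h => hzc (h ▸ Set.mem_insert m I)⟩
    push Not at hz
    obtain ⟨u, huI, huz, hune⟩ := hz
    have hmz : m < z := by
      rcases hbelow u (huz.lt_of_ne hune) with rfl | h
      · exact huz.lt_of_ne hune
      · exact absurd h huI
    refine Or.inr ⟨⟨hmz, fun v hmv hvz => ?_⟩, hbelow⟩
    rcases hbelow v hvz with rfl | hvI
    · exact hmv.ne rfl
    · exact hm.1 (hI hmv.le hvI)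
  · rintro (⟨⟨hzI, hzmin⟩, hzm⟩ | ⟨hmz, hbelow⟩)
    · refine ⟨?_, fun u hu huz => hzmin u (fun huI => hu (Or.inr huI)) huz⟩
      rintro (rfl | h)
      · exact hzm rfl
      · exact hzI h
    · refine ⟨?_, fun u hu huz => ?_⟩
      · rintro (rfl | h)
        · exact hmz.lt.false
        · exact hm.1 (hI hmz.lt.le h)
      · by_contra hne
        exact hu (hbelow u (huz.lt_of_ne hne))

end LowerSet

namespace IdealDiff

variable {P : Type*} [PartialOrder P] {w : P → ℤ} {r : ℤ} {I : Set P} {m : P}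

theorem finsum_newMinIn_add_finsum_maxIn_inter_Iio (hdiff : IdealDiff w r) (hIfin : I.Finite)
    (hI : IsLowerSet I) (hm : m ∈ minIn Iᶜ) :
    ∑ᶠ z ∈ newMinIn I m, w z + ∑ᶠ c ∈ maxIn I ∩ Set.Iio m, w c = 2 * w m := by
  obtain ⟨hminI, heqI⟩ := hdiff I hIfin hI
  obtain ⟨hminJ, heqJ⟩ := hdiff (insert m I) (hIfin.insert m) (hI.insert_of_mem_minIn_compl hm)
  have hmaxI : (maxIn I).Finite := hIfin.subset fun z hz => hz.1
  rw [minIn_compl_insert hI hm] at hminJ heqJ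
  have hdisj : Disjoint (minIn Iᶜ \ {m}) (newMinIn I m) :=
    Set.disjoint_left.2 fun z hz hz' => hz.2 (hz.1.2 m hm.1 hz'.1.le).symm
  rw [maxIn_insert hI hm.1, finsum_mem_insert _ (fun h => hm.1 h.1.1) hmaxI.sdiff,
    finsum_mem_union hdisj hminI.sdiff (hminJ.subset Set.subset_union_right)] at heqJ
  rw [← finsum_mem_inter_add_sdiff (Set.Iio m) hmaxI] at heqI
  rw [← Set.insert_eq_of_mem hm, ← Set.insert_sdiff_singleton,
    finsum_mem_insert _ (Set.notMem_sdiff_of_mem (Set.mem_singleton m)) hminI.sdiff] at heqI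
  linarith

end IdealDiff

section Commute

variable {P : Type*} [PartialOrder P] {I : Set P} {x y : P}

lemma newMinIn_insert_eq (hI : IsLowerSet I) (hx : x ∈ minIn Iᶜ) (hy : y ∉ I)
    (hcov : ∀ z, x ⋖ z → y ⋖ z → ∃ u < z, u ∉ insert x (insert y I)) :
    newMinIn (insert y I) x = newMinIn I x := by
  refine Set.Subset.antisymm (fun z ⟨hxz, hbelow⟩ => ⟨hxz, fun u huz => ?_⟩)
    fun z hz => ⟨hz.1, fun u hu => Set.insert_subset_insert (Set.subset_insert y I) (hz.2 u hu)⟩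
  have hyz : ¬ y < z := by
    intro hyz
    have hycov : y ⋖ z := ⟨hyz, fun v hyv hvz => by
      rcases hbelow v hvz with rfl | rfl | hvI
      · exact hy (mem_of_lt_of_mem_minIn_compl hx hyv)
      · exact hyv.false
      · exact hy (hI hyv.le hvI)⟩
    obtain ⟨u, huz, hu⟩ := hcov z hxz hycov
    exact hu (hbelow u huz)
  rcases hbelow u huz with rfl | rfl | huI
  · exact Set.mem_insert u I
  · exact absurd huz hyz
  · exact Or.inr huI

theorem IdealDiff.maxIn_inter_Iio_inter_Iio_eq_empty {w : P → ℤ} {r : ℤ}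
    (hdiff : IdealDiff w r) (hw : ∀ z, 0 < w z) (hIfin : I.Finite) (hI : IsLowerSet I)
    (hx : x ∈ minIn Iᶜ) (hy : y ∈ minIn Iᶜ) (hxy : x ≠ y)
    (hcov : ∀ z, x ⋖ z → y ⋖ z → ∃ u < z, u ∉ insert x (insert y I)) :
    maxIn I ∩ Set.Iio x ∩ Set.Iio y = ∅ := by
  have hyx : y ∉ Set.Iio x := fun h => hy.1 (mem_of_lt_of_mem_minIn_compl hx h)
  have hx' : x ∈ minIn (insert y I)ᶜ := by
    rw [minIn_compl_insert hI hy]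
    exact Or.inl ⟨hx, hxy⟩
  have hmaxI : (maxIn I).Finite := hIfin.subset fun z hz => hz.1
  have hsumI := hdiff.finsum_newMinIn_add_finsum_maxIn_inter_Iio hIfin hI hx
  have hsumJ := hdiff.finsum_newMinIn_add_finsum_maxIn_inter_Iio (hIfin.insert y)
    (hI.insert_of_mem_minIn_compl hy) hx'
  rw [newMinIn_insert_eq hI hx hy.1 hcov, maxIn_insert hI hy.1, Set.insert_inter_of_notMem hyx,
    Set.sdiff_inter_right_comm] at hsumJ
  rw [← finsum_mem_inter_add_sdiff (Set.Iio y) (hmaxI.inter_of_left _)] at hsumI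
  refine Set.eq_empty_iff_forall_notMem.2 fun c hc => ?_
  have hpos := finsum_cond_pos (p := (· ∈ maxIn I ∩ Set.Iio x ∩ Set.Iio y))
    (fun i _ => (hw i).le) ⟨c, hc, hw c⟩
    (((hmaxI.inter_of_left _).inter_of_left _).inter_of_right _)
  linarith

end Commute

section Iio

variable {P : Type*} [PartialOrder P] {x y : P}

lemma Finitary.finite_Iio_union_Iio (hfin : Finitary P) (x y : P) :
    (Set.Iio x ∪ Set.Iio y).Finite :=
  ((hfin x).subset fun _ => le_of_lt).union ((hfin y).subset fun _ => le_of_lt)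

lemma mem_minIn_compl_Iio_union_Iio (hxy : ¬ x < y) : x ∈ minIn (Set.Iio x ∪ Set.Iio y)ᶜ :=
  ⟨fun h => h.elim (lt_irrefl x) hxy,
    fun _ hc hcx => by_contra fun hne => hc (Or.inl (hcx.lt_of_ne hne))⟩

lemma mem_maxIn_Iio_union_Iio {a : P} (hax : a ⋖ x) (hay : a ⋖ y) :
    a ∈ maxIn (Set.Iio x ∪ Set.Iio y) := by
  refine ⟨Or.inl hax.lt, fun c hc hac => by_contra fun hne => ?_⟩
  rcases hc with hcx | hcy
  · exact hax.2 (hac.lt_of_ne' hne) hcx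
  · exact hay.2 (hac.lt_of_ne' hne) hcy

end Iio

/-- Two siblings of `p` sharing a common lower cover of `p` below them and a common upper
cover of `p` above them are equal. -/
theorem stmt11 {P : Type*} [PartialOrder P]
    (hfin : Finitary P) (hucm : UCM P)
    (w : P → ℤ) (hw : ∀ x : P, 0 < w x)
    (r : ℤ) (hdiff : IdealDiff w r)
    (p : P) (x y : P) (hx : x ∈ Sset p) (hy : y ∈ Sset p)
    (ha : ∃ a : P, a ⋖ p ∧ a < x ∧ a < y)
    (hb : ∃ b : P, p ⋖ b ∧ x < b ∧ y < b) :
    x = y := by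
  obtain ⟨a, hap, hax, hay⟩ := ha
  obtain ⟨b, hpb, hxb, hyb⟩ := hb
  by_contra hxy
  obtain ⟨hax', hxb'⟩ := hucm.covBy_and_covBy_of_lt_of_lt hfin hap hpb hax hxb
  obtain ⟨hay', hyb'⟩ := hucm.covBy_and_covBy_of_lt_of_lt hfin hap hpb hay hyb
  have hxmin := mem_minIn_compl_Iio_union_Iio (fun h : x < y => hxb'.2 h hyb)
  have hymin : y ∈ minIn (Set.Iio x ∪ Set.Iio y)ᶜ :=
    Set.union_comm (Set.Iio y) _ ▸ mem_minIn_compl_Iio_union_Iio fun h : y < x => hyb'.2 h hxb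
  -- `b` is the only common cover of `x` and `y`, and `p < b` is neither `x`, `y` nor below them
  have hcov : ∀ z, x ⋖ z → y ⋖ z →
      ∃ u < z, u ∉ insert x (insert y (Set.Iio x ∪ Set.Iio y)) := by
    intro z hxz hyz
    obtain rfl :=
      (hucm x y hxy (Or.inr ⟨b, hxb', hyb'⟩)).2.unique ⟨hxz, hyz⟩ ⟨hxb', hyb'⟩
    refine ⟨p, hpb.lt, ?_⟩
    rintro (rfl | rfl | hpx | hpy)
    · exact hx.1 rfl
    · exact hy.1 rfl
    · exact hpb.2 hpx hxb
    · exact hpb.2 hpy hyb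
  have hempty := hdiff.maxIn_inter_Iio_inter_Iio_eq_empty hw (hfin.finite_Iio_union_Iio x y)
    ((isLowerSet_Iio x).union (isLowerSet_Iio y)) hxmin hymin hxy hcov
  exact hempty.subset ⟨⟨mem_maxIn_Iio_union_Iio hax' hay', hax⟩, hay⟩
end

section
/- Let P be a finitary unique-cover-modular poset, let w : P → ℤ take only positive values, and let r be an integer such that (w, r) satisfies the ideal-differential condition on P. Then no element of P covers three distinct elements: there do not exist a ∈ P and pairwise distinct p, q, s ∈ P with p ⋖ a, q ⋖ a and s ⋖ a. -/
open scoped BigOperators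

/-- Auxiliary: `x` is tame if every element strictly between `x` and `a`
is one of `p`, `q`, `s`. -/
def tameP {P : Type*} [PartialOrder P] (a p q s x : P) : Prop :=
  ∀ z : P, x < z → z < a → (z = p ∨ z = q ∨ z = s)

/-- Auxiliary: the maximal elements of `{y | y < a} \ T`. -/
def Mset {P : Type*} [PartialOrder P] (a p q s : P) (T : Set P) : Set P :=
  {x | x < a ∧ x ∉ T ∧ tameP a p q s x ∧
    (x < p → p ∈ T) ∧ (x < q → q ∈ T) ∧ (x < s → s ∈ T)}

/-- Auxiliary: the minimal elements of the complement apart from `T`. -/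
def Zset {P : Type*} [PartialOrder P] (a : P) (T : Set P) : Set P :=
  {x | ¬ x < a ∧ (∀ u : P, u < x → u < a) ∧ ∀ t ∈ T, ¬ t < x}

/-- No element of `P` covers three distinct elements. -/
theorem stmt14 {P : Type*} [PartialOrder P]
    (hfin : Finitary P) (hucm : UCM P)
    (w : P → ℤ) (hw : ∀ x : P, 0 < w x)
    (r : ℤ) (hdiff : IdealDiff w r) :
    ¬ ∃ (a p q s : P), p ≠ q ∧ p ≠ s ∧ q ≠ s ∧ p ⋖ a ∧ q ⋖ a ∧ s ⋖ a := by
  classical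
  rintro ⟨a, p, q, s, hpq, hps, hqs, hp, hq, hs⟩
  have hqp : q ≠ p := hpq.symm
  have hsp : s ≠ p := hps.symm
  have hsq : s ≠ q := hqs.symm
  have hpa : p < a := hp.1
  have hqa : q < a := hq.1
  have hsa : s < a := hs.1
  have hnpq : ¬ p < q := fun h => hp.2 h hqa
  have hnqp : ¬ q < p := fun h => hq.2 h hpa
  have hnps : ¬ p < s := fun h => hp.2 h hsa
  have hnsp : ¬ s < p := fun h => hs.2 h hpa
  have hnqs : ¬ q < s := fun h => hq.2 h hsa
  have hnsq : ¬ s < q := fun h => hs.2 h hqa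
  have hDfin : ({y : P | y < a}).Finite := (hfin a).subset (fun y hy => le_of_lt hy)
  -- conversion of finite finsums to finset sums with indicators
  have conv : ∀ (S : Set P) (F : Finset P) (hS : S.Finite), S ⊆ ↑F →
      ∑ᶠ x ∈ S, w x = ∑ x ∈ F, if x ∈ S then w x else 0 := by
    intro S F hS hsub
    rw [finsum_mem_eq_finite_toFinset_sum w hS]
    have h1 : ∑ x ∈ hS.toFinset, w x
        = ∑ x ∈ hS.toFinset, (if x ∈ S then w x else 0) :=
      Finset.sum_congr rfl (fun x hx => by rw [if_pos (hS.mem_toFinset.mp hx)])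
    rw [h1]
    refine Finset.sum_subset (fun x hx => ?_) (fun x hxF hxS => ?_)
    · exact hsub (hS.mem_toFinset.mp hx)
    · rw [if_neg]; intro hx; exact hxS (hS.mem_toFinset.mpr hx)
  -- the key equation for each `T ⊆ {p, q, s}`
  have key : ∀ T : Set P, T ⊆ {p, q, s} →
      (Mset a p q s T).Finite ∧ (Zset a T).Finite ∧
      ((∑ᶠ y ∈ Mset a p q s T, w y) + r = (∑ᶠ t ∈ T, w t) + ∑ᶠ z ∈ Zset a T, w z) := by
    intro T hT
    have hcov : ∀ t ∈ T, t ⋖ a := by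
      intro t ht
      have h := hT ht
      simp only [Set.mem_insert_iff, Set.mem_singleton_iff] at h
      rcases h with h | h | h <;> subst h <;> assumption
    have hTD : T ⊆ {y : P | y < a} := fun t ht => (hcov t ht).1
    have hTfin : T.Finite :=
      Set.Finite.subset (((Set.finite_singleton s).insert q).insert p) hT
    have hIfin : (({y : P | y < a}) \ T).Finite := hDfin.diff
    have hIlow : IsLowerSet (({y : P | y < a}) \ T) := by
      intro x y hxy hx
      refine ⟨lt_of_le_of_lt hxy hx.1, fun hyT => ?_⟩
      rcases lt_or_eq_of_le hxy with h | h
      · exact (hcov y hyT).2 h hx.1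
      · exact hx.2 (h ▸ hyT)
    obtain ⟨hminfin, heq⟩ := hdiff (({y : P | y < a}) \ T) hIfin hIlow
    have hmax : maxIn (({y : P | y < a}) \ T) = Mset a p q s T := by
      ext x
      constructor
      · rintro ⟨⟨hxa, hxT⟩, hmax⟩
        refine ⟨hxa, hxT, ?_, ?_, ?_, ?_⟩
        · intro z hxz hza
          by_cases hzT : z ∈ T
          · have h := hT hzT
            simpa only [Set.mem_insert_iff, Set.mem_singleton_iff] using h
          · have h := hmax z ⟨hza, hzT⟩ (le_of_lt hxz)
            exact absurd (h ▸ hxz) (lt_irrefl x)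
        · intro hxp
          by_contra hpT
          have h := hmax p ⟨hpa, hpT⟩ (le_of_lt hxp)
          exact absurd (h ▸ hxp) (lt_irrefl x)
        · intro hxq
          by_contra hqT
          have h := hmax q ⟨hqa, hqT⟩ (le_of_lt hxq)
          exact absurd (h ▸ hxq) (lt_irrefl x)
        · intro hxs
          by_contra hsT
          have h := hmax s ⟨hsa, hsT⟩ (le_of_lt hxs)
          exact absurd (h ▸ hxs) (lt_irrefl x)
      · rintro ⟨hxa, hxT, htame, hip, hiq, his⟩
        refine ⟨⟨hxa, hxT⟩, ?_⟩
        rintro b ⟨hba, hbT⟩ hxb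
        rcases lt_or_eq_of_le hxb with h | h
        · rcases htame b h hba with rfl | rfl | rfl
          · exact absurd (hip h) hbT
          · exact absurd (hiq h) hbT
          · exact absurd (his h) hbT
        · exact h.symm
    have hmin : minIn ((({y : P | y < a}) \ T))ᶜ = T ∪ Zset a T := by
      ext x
      constructor
      · rintro ⟨hxc, hmin⟩
        by_cases hxT : x ∈ T
        · exact Or.inl hxT
        · refine Or.inr ⟨?_, ?_, ?_⟩
          · intro hxa
            exact hxc ⟨hxa, hxT⟩
          · intro u hu
            by_contra hua
            have h : u = x := hmin u (fun hI => hua hI.1) (le_of_lt hu)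
            exact absurd (h ▸ hu) (lt_irrefl x)
          · intro t htT hlt
            have h : t = x := hmin t (fun hI => hI.2 htT) (le_of_lt hlt)
            exact absurd (h ▸ hlt) (lt_irrefl x)
      · rintro (hxT | ⟨hxa, hall, hT'⟩)
        · refine ⟨fun hI => hI.2 hxT, ?_⟩
          rintro b hbI hbx
          rcases lt_or_eq_of_le hbx with h | h
          · exfalso
            have hba : b < a := lt_trans h (hcov x hxT).1
            have hbT : b ∈ T := by
              by_contra hbT'
              exact hbI ⟨hba, hbT'⟩
            exact (hcov b hbT).2 h (hcov x hxT).1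
          · exact h
        · refine ⟨fun hI => hxa hI.1, ?_⟩
          rintro b hbI hbx
          rcases lt_or_eq_of_le hbx with h | h
          · exfalso
            have hba : b < a := hall b h
            have hbT : b ∈ T := by
              by_contra hbT'
              exact hbI ⟨hba, hbT'⟩
            exact hT' b hbT h
          · exact h
    have hMfin : (Mset a p q s T).Finite := hDfin.subset (fun x hx => hx.1)
    have hZfin : (Zset a T).Finite := by
      apply hminfin.subset
      rw [hmin]
      exact Set.subset_union_right
    refine ⟨hMfin, hZfin, ?_⟩
    have hdis : Disjoint T (Zset a T) :=
      Set.disjoint_left.mpr (fun t htT htZ => htZ.1 ((hcov t htT).1))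
    rw [hmax, hmin, finsum_mem_union hdis hTfin hZfin] at heq
    exact heq
  -- instantiate at the eight subsets
  obtain ⟨hMf0, hZf0, e0⟩ := key ∅ (Set.empty_subset _)
  obtain ⟨hMfp, hZfp, ep⟩ := key {p} (by intro x hx; simp only [Set.mem_singleton_iff] at hx; simp [hx])
  obtain ⟨hMfq, hZfq, eq'⟩ := key {q} (by intro x hx; simp only [Set.mem_singleton_iff] at hx; simp [hx])
  obtain ⟨hMfs, hZfs, es⟩ := key {s} (by intro x hx; simp only [Set.mem_singleton_iff] at hx; simp [hx])
  obtain ⟨hMfpq, hZfpq, epq⟩ := key {p, q} (by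
    intro x hx; simp only [Set.mem_insert_iff, Set.mem_singleton_iff] at hx ⊢; tauto)
  obtain ⟨hMfps, hZfps, eps⟩ := key {p, s} (by
    intro x hx; simp only [Set.mem_insert_iff, Set.mem_singleton_iff] at hx ⊢; tauto)
  obtain ⟨hMfqs, hZfqs, eqs⟩ := key {q, s} (by
    intro x hx; simp only [Set.mem_insert_iff, Set.mem_singleton_iff] at hx ⊢; tauto)
  obtain ⟨hMfall, hZfall, eall⟩ := key {p, q, s} subset_rfl
  -- common finsets
  have hMsubs : ∀ T : Set P, Mset a p q s T ⊆ ↑(hDfin.toFinset) := by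
    intro T x hx
    rw [Set.Finite.coe_toFinset]
    exact hx.1
  have hZsubs : ∀ T : Set P, Zset a T ⊆ ↑(hZf0.toFinset) := by
    intro T x hx
    rw [Set.Finite.coe_toFinset]
    exact ⟨hx.1, hx.2.1, fun t ht => absurd ht (Set.notMem_empty t)⟩
  -- explicit values of the sums over T
  have htrip : ∑ᶠ t ∈ ({p, q, s} : Set P), w t = w p + w q + w s := by
    have hcoe : ({p, q, s} : Set P) = (({p, q, s} : Finset P) : Set P) := by simp
    rw [hcoe, finsum_mem_coe_finset, Finset.sum_insert (by simp [hpq, hps]),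
      Finset.sum_insert (by simp [hqs]), Finset.sum_singleton]
    ring
  -- rewrite the eight equations
  rw [conv _ hDfin.toFinset hMf0 (hMsubs _), conv _ hZf0.toFinset hZf0 (hZsubs _),
    finsum_mem_empty] at e0
  rw [conv _ hDfin.toFinset hMfp (hMsubs _), conv _ hZf0.toFinset hZfp (hZsubs _),
    finsum_mem_singleton] at ep
  rw [conv _ hDfin.toFinset hMfq (hMsubs _), conv _ hZf0.toFinset hZfq (hZsubs _),
    finsum_mem_singleton] at eq'
  rw [conv _ hDfin.toFinset hMfs (hMsubs _), conv _ hZf0.toFinset hZfs (hZsubs _),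
    finsum_mem_singleton] at es
  rw [conv _ hDfin.toFinset hMfpq (hMsubs _), conv _ hZf0.toFinset hZfpq (hZsubs _),
    finsum_mem_pair hpq] at epq
  rw [conv _ hDfin.toFinset hMfps (hMsubs _), conv _ hZf0.toFinset hZfps (hZsubs _),
    finsum_mem_pair hps] at eps
  rw [conv _ hDfin.toFinset hMfqs (hMsubs _), conv _ hZf0.toFinset hZfqs (hZsubs _),
    finsum_mem_pair hqs] at eqs
  rw [conv _ hDfin.toFinset hMfall (hMsubs _), conv _ hZf0.toFinset hZfall (hZsubs _),
    htrip] at eall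
  -- pointwise identity on the M side
  have point_m : ∀ x : P, x < a →
      ((if x ∈ Mset a p q s (∅ : Set P) then w x else 0) +
       (if x ∈ Mset a p q s {p, q} then w x else 0) +
       (if x ∈ Mset a p q s {p, s} then w x else 0) +
       (if x ∈ Mset a p q s {q, s} then w x else 0) +
       (if (x < p ∧ x < q ∧ x < s ∧ tameP a p q s x) then w x else 0)) =
      ((if x ∈ Mset a p q s {p} then w x else 0) +
       (if x ∈ Mset a p q s {q} then w x else 0) +
       (if x ∈ Mset a p q s {s} then w x else 0) +
       (if x ∈ Mset a p q s {p, q, s} then w x else 0)) := by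
    intro x hxa
    by_cases htame : tameP a p q s x
    · by_cases hxp : x = p
      · subst hxp
        simp [Mset, Set.mem_setOf_eq, Set.mem_insert_iff, Set.mem_singleton_iff, htame, hxa,
          hpq, hps, hnpq, hnps, lt_self_iff_false]
      · by_cases hxq : x = q
        · subst hxq
          simp [Mset, Set.mem_setOf_eq, Set.mem_insert_iff, Set.mem_singleton_iff, htame, hxa,
            hqp, hqs, hnqp, hnqs, lt_self_iff_false]
        · by_cases hxs : x = s
          · subst hxs
            simp [Mset, Set.mem_setOf_eq, Set.mem_insert_iff, Set.mem_singleton_iff, htame, hxa,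
              hsp, hsq, hnsp, hnsq, lt_self_iff_false]
          · by_cases hbp : x < p <;> by_cases hbq : x < q <;> by_cases hbs : x < s <;>
              simp [Mset, Set.mem_setOf_eq, Set.mem_insert_iff, Set.mem_singleton_iff, htame,
                hxa, hbp, hbq, hbs, hxp, hxq, hxs, hpq, hps, hqs, hqp, hsp, hsq] <;>
              ring
    · simp [Mset, Set.mem_setOf_eq, htame]
  -- pointwise identity on the Z side
  have point_z : ∀ x : P, x ∈ Zset a (∅ : Set P) →
      ((if x ∈ Zset a (∅ : Set P) then w x else 0) +
       (if x ∈ Zset a {p, q} then w x else 0) +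
       (if x ∈ Zset a {p, s} then w x else 0) +
       (if x ∈ Zset a {q, s} then w x else 0)) =
      ((if x ∈ Zset a {p} then w x else 0) +
       (if x ∈ Zset a {q} then w x else 0) +
       (if x ∈ Zset a {s} then w x else 0) +
       (if x ∈ Zset a {p, q, s} then w x else 0) +
       (if (p < x ∧ q < x ∧ s < x) then w x else 0)) := by
    rintro x ⟨h1, h2, -⟩
    have hz : ∀ T : Set P, x ∈ Zset a T ↔ ∀ t ∈ T, ¬ t < x :=
      fun T => ⟨fun h => h.2.2, fun h => ⟨h1, h2, h⟩⟩
    by_cases hcp : p < x <;> by_cases hcq : q < x <;> by_cases hcs : s < x <;>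
      simp [hz, Set.mem_insert_iff, Set.mem_singleton_iff, hcp, hcq, hcs] <;>
      ring
  -- sum the pointwise identities
  have Hm : (∑ x ∈ hDfin.toFinset,
        ((if x ∈ Mset a p q s (∅ : Set P) then w x else 0) +
         (if x ∈ Mset a p q s {p, q} then w x else 0) +
         (if x ∈ Mset a p q s {p, s} then w x else 0) +
         (if x ∈ Mset a p q s {q, s} then w x else 0) +
         (if (x < p ∧ x < q ∧ x < s ∧ tameP a p q s x) then w x else 0))) =
      ∑ x ∈ hDfin.toFinset,
        ((if x ∈ Mset a p q s {p} then w x else 0) +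
         (if x ∈ Mset a p q s {q} then w x else 0) +
         (if x ∈ Mset a p q s {s} then w x else 0) +
         (if x ∈ Mset a p q s {p, q, s} then w x else 0)) :=
    Finset.sum_congr rfl (fun x hx => point_m x (hDfin.mem_toFinset.mp hx))
  have Hz : (∑ x ∈ hZf0.toFinset,
        ((if x ∈ Zset a (∅ : Set P) then w x else 0) +
         (if x ∈ Zset a {p, q} then w x else 0) +
         (if x ∈ Zset a {p, s} then w x else 0) +
         (if x ∈ Zset a {q, s} then w x else 0))) =
      ∑ x ∈ hZf0.toFinset,
        ((if x ∈ Zset a {p} then w x else 0) +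
         (if x ∈ Zset a {q} then w x else 0) +
         (if x ∈ Zset a {s} then w x else 0) +
         (if x ∈ Zset a {p, q, s} then w x else 0) +
         (if (p < x ∧ q < x ∧ s < x) then w x else 0)) :=
    Finset.sum_congr rfl (fun x hx => point_z x (hZf0.mem_toFinset.mp hx))
  simp only [Finset.sum_add_distrib] at Hm Hz
  -- positivity facts
  have hA : (0 : ℤ) ≤ ∑ x ∈ hDfin.toFinset,
      (if (x < p ∧ x < q ∧ x < s ∧ tameP a p q s x) then w x else 0) :=
    Finset.sum_nonneg (fun i _ => by split_ifs with h; exacts [(hw i).le, le_rfl])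
  have hB : w a ≤ ∑ x ∈ hZf0.toFinset, (if (p < x ∧ q < x ∧ s < x) then w x else 0) := by
    have ha : a ∈ hZf0.toFinset := hZf0.mem_toFinset.mpr
      ⟨lt_irrefl a, fun u hu => hu, fun t ht => absurd ht (Set.notMem_empty t)⟩
    have h := Finset.single_le_sum
      (f := fun x => if (p < x ∧ q < x ∧ s < x) then w x else 0)
      (fun i _ => by split_ifs with h; exacts [(hw i).le, le_rfl]) ha
    simpa [hpa, hqa, hsa] using h
  linarith only [e0, ep, eq', es, epq, eps, eqs, eall, Hm, Hz, hA, hB, hw a]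
end

section
/- Let P be a nonempty finitary unique-cover-modular poset in which any two elements are joined by a finite sequence of elements each consecutive pair of which is a covering pair in one direction or the other. Then P has a minimum element, i.e. there exists m ∈ P with m ≤ x for all x ∈ P. -/
open Relation

theorem Relation.ReflTransGen.of_forall_lt {α : Type*} {r : α → α → Prop} {y : ℕ → α} :
    ∀ {m : ℕ}, (∀ j < m, r (y j) (y (j + 1))) → ReflTransGen r (y 0) (y m)
  | 0, _ => .refl
  | m + 1, h => (of_forall_lt fun j hj => h j (by omega)).tail (h m (by omega))

section

variable {P : Type*} [PartialOrder P]

theorem UCM.exists_covBy_covBy (hucm : UCM P) {x y b : P} (hxy : x ≠ y) (hx : x ⋖ b)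
    (hy : y ⋖ b) : ∃ a, a ⋖ x ∧ a ⋖ y :=
  (hucm x y hxy (.inr ⟨b, hx, hy⟩)).1.exists

theorem Relation.ReflTransGen.exists_le_le_of_covBy
    (hlow : ∀ {x y b : P}, x ≠ y → x ⋖ b → y ⋖ b → ∃ a, a ⋖ x ∧ a ⋖ y) {x b : P}
    (hxb : ReflTransGen (· ⋖ ·) x b) {a : P} (hab : a ⋖ b) : ∃ z, z ≤ x ∧ z ≤ a := by
  induction hxb generalizing a with
  | refl => exact ⟨a, hab.le, le_rfl⟩
  | @tail c b hxc hcb ih =>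
    by_cases hac : a = c
    · have hxc_le : x ≤ c := by
        simpa only [reflTransGen_eq_self, Function.onFun, id] using hxc.lift id fun _ _ h => h.le
      exact ⟨x, le_rfl, hac ▸ hxc_le⟩
    · obtain ⟨d, hda, hdc⟩ := hlow hac hab hcb
      obtain ⟨z, hzx, hzd⟩ := ih hdc
      exact ⟨z, hzx, hzd.trans hda.le⟩

namespace Finitary

theorem reflTransGen_covBy_of_le (hfin : Finitary P) {a b : P} (hab : a ≤ b) :
    ReflTransGen (· ⋖ ·) a b :=
  letI := LocallyFiniteOrder.ofFiniteIcc fun _ b => (hfin b).subset fun _ h => h.2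
  le_iff_reflTransGen_covBy.mp hab

theorem exists_isMin_le (hfin : Finitary P) (a : P) : ∃ m, IsMin m ∧ m ≤ a := by
  obtain ⟨m, hma, hm⟩ := (hfin a).exists_le_minimal (le_refl a)
  exact ⟨m, ((minimal_iff_isMin fun _ _ hy hxy => hxy.trans hy).mp hm).2, hma⟩

theorem exists_le_le_of_reflTransGen (hfin : Finitary P)
    (hlow : ∀ {x y b : P}, x ≠ y → x ⋖ b → y ⋖ b → ∃ a, a ⋖ x ∧ a ⋖ y) {a b : P}
    (hab : ReflTransGen (fun x y : P => x ⋖ y ∨ y ⋖ x) a b) : ∃ z, z ≤ a ∧ z ≤ b := by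
  induction hab with
  | refl => exact ⟨a, le_rfl, le_rfl⟩
  | tail _ hcd ih =>
    obtain ⟨z, hza, hzc⟩ := ih
    rcases hcd with hcd | hdc
    · exact ⟨z, hza, hzc.trans hcd.le⟩
    · obtain ⟨w, hwz, hwd⟩ :=
        (hfin.reflTransGen_covBy_of_le hzc).exists_le_le_of_covBy hlow hdc
      exact ⟨w, hwz.trans hza, hwd⟩

end Finitary

end

/-- A nonempty finitary unique-cover-modular poset that is connected by zig-zag covering
paths has a minimum element. -/
theorem stmt16 {P : Type*} [PartialOrder P] [Nonempty P]
    (hfin : Finitary P) (hucm : UCM P)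
    (hconn : ∀ a b : P, ∃ (m : ℕ) (y : ℕ → P), y 0 = a ∧ y m = b ∧
      ∀ j < m, y j ⋖ y (j + 1) ∨ y (j + 1) ⋖ y j) :
    ∃ m : P, ∀ x : P, m ≤ x := by
  have : IsCodirectedOrder P := ⟨fun a b => by
    obtain ⟨m, y, rfl, rfl, hy⟩ := hconn a b
    exact hfin.exists_le_le_of_reflTransGen hucm.exists_covBy_covBy (.of_forall_lt hy)⟩
  obtain ⟨m, hm, -⟩ := hfin.exists_isMin_le (Classical.arbitrary P)
  exact ⟨m, isBot_iff_isMin.mpr hm⟩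
end

section
/- Let P be a locally finite unique-cover-modular poset with a least element ⊥. Then P is graded: there exists a function ρ : P → ℕ with ρ(⊥) = 0 such that ρ(b) = ρ(a) + 1 whenever a ⋖ b in P. -/
section CovChain

variable {P : Type*} [PartialOrder P] [OrderBot P]

def CovChainLength : ℕ → P → Prop
  | 0, x => x = ⊥
  | n + 1, x => ∃ y, CovChainLength n y ∧ y ⋖ x

lemma exists_covChainLength [LocallyFiniteOrder P] (x : P) : ∃ n, CovChainLength n x := by
  induction le_iff_reflTransGen_covBy.mp (bot_le : ⊥ ≤ x) with
  | refl => exact ⟨0, rfl⟩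
  | tail _ hyz ih =>
    obtain ⟨n, hn⟩ := ih
    exact ⟨n + 1, _, hn, hyz⟩

lemma covChainLength_unique [LocallyFiniteOrder P]
    (hlower : ∀ a b x : P, a ≠ b → a ⋖ x → b ⋖ x → ∃ c, c ⋖ a ∧ c ⋖ b) :
    ∀ n (x : P), CovChainLength n x → ∀ m, CovChainLength m x → m = n := by
  intro n
  induction n with
  | zero =>
    rintro x rfl (_ | m) ⟨y, -, hy⟩
    · rfl
    · exact absurd hy.lt not_lt_bot
  | succ k ih =>
    rintro x ⟨a, ha, hax⟩ (_ | m) hm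
    · rw [show x = ⊥ from hm] at hax
      exact absurd hax.lt not_lt_bot
    obtain ⟨b, hb, hbx⟩ := hm
    by_cases hab : a = b
    · subst hab
      rw [ih a ha m hb]
    obtain ⟨c, hca, hcb⟩ := hlower a b x hab hax hbx
    obtain ⟨j, hc⟩ := exists_covChainLength c
    have hjk : j + 1 = k := ih a ha (j + 1) ⟨c, hc, hca⟩
    have hb' : CovChainLength k b := hjk ▸ (⟨c, hc, hcb⟩ : CovChainLength (j + 1) b)
    rw [ih b hb' m hb]

end CovChain

lemma UCM.exists_covBy_covBy_of_covBy {P : Type*} [PartialOrder P] (hucm : UCM P)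
    {a b x : P} (hab : a ≠ b) (hax : a ⋖ x) (hbx : b ⋖ x) : ∃ c, c ⋖ a ∧ c ⋖ b :=
  (hucm a b hab (Or.inr ⟨x, hax, hbx⟩)).1.exists

/-- A locally finite unique-cover-modular poset with a least element is graded. -/
theorem stmt17 {P : Type*} [PartialOrder P] [LocallyFiniteOrder P] [OrderBot P]
    (hucm : UCM P) :
    ∃ ρ : P → ℕ, ρ ⊥ = 0 ∧ ∀ a b : P, a ⋖ b → ρ b = ρ a + 1 := by
  have hunique := covChainLength_unique fun _ _ _ hab hax hbx ↦
    hucm.exists_covBy_covBy_of_covBy hab hax hbx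
  choose ρ hρ using exists_covChainLength (P := P)
  exact ⟨ρ, hunique 0 ⊥ rfl _ (hρ ⊥),
    fun a b hab ↦ hunique (ρ a + 1) b ⟨a, hρ a, hab⟩ _ (hρ b)⟩
end

section
/- Let x, y, z be rational numbers such that each of x, y, z is either 0 or the reciprocal of a nonzero integer, and x + y + z = 1. Then, as an unordered triple, {x, y, z} is one of: {1, 1/n, −1/n} for some integer n ≥ 1; {1, 0, 0}; {1/2, 1/2, 0}; {1/2, 1/3, 1/6}; {1/2, 1/4, 1/4}; {1/3, 1/3, 1/3}. -/
/-!
After sorting, the largest term is at least `1/3`, so it is `1`, `1/2` or `1/3`. If it is `1`, the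
other two cancel; if it is `1/2`, the middle term lies in `[1/4, 1/2]`, so it is `1/2`, `1/3` or
`1/4`; if it is `1/3`, all three terms equal `1/3`. In each case the smallest term is determined by
the other two.
-/

theorem Multiset.exists_eq_triple_antitone {α : Type*} [LinearOrder α] (x y z : α) :
    ∃ a b c : α, ({x, y, z} : Multiset α) = {a, b, c} ∧ c ≤ b ∧ b ≤ a := by
  set s : Multiset α := {x, y, z}
  have hlen : (s.sort (· ≥ ·)).length = 3 := by simp [s]
  match s.sort (· ≥ ·), hlen, s.pairwise_sort (· ≥ ·), s.sort_eq (· ≥ ·) with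
  | [a, b, c], _, hsorted, hs =>
    simp only [List.pairwise_cons, List.mem_cons, List.not_mem_nil] at hsorted
    exact ⟨a, b, c, hs.symm, hsorted.2.1 c (by simp), hsorted.1 b (by simp)⟩

def IsZeroOrReciprocal (q : ℚ) : Prop :=
  q = 0 ∨ ∃ n : ℤ, n ≠ 0 ∧ q = 1 / (n : ℚ)

def IsListedDecomposition (s : Multiset ℚ) : Prop :=
  (∃ n : ℤ, 1 ≤ n ∧ s = {1, 1 / (n : ℚ), -(1 / (n : ℚ))}) ∨
    s = {1, 0, 0} ∨ s = {1/2, 1/2, 0} ∨ s = {1/2, 1/3, 1/6} ∨ s = {1/2, 1/4, 1/4} ∨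
    s = {1/3, 1/3, 1/3}

namespace IsZeroOrReciprocal

variable {q : ℚ}

theorem exists_pos_eq_one_div (hq : IsZeroOrReciprocal q) (hpos : 0 < q) :
    ∃ n : ℤ, 0 < n ∧ q = 1 / (n : ℚ) := by
  rcases hq with rfl | ⟨n, -, rfl⟩
  · exact absurd hpos (lt_irrefl 0)
  · exact ⟨n, by simpa using hpos, rfl⟩

theorem exists_eq_one_div_of_le {c : ℚ} (hq : IsZeroOrReciprocal q) (hc : 0 < c) (hcq : c ≤ q) :
    ∃ n : ℤ, 0 < n ∧ (n : ℚ) ≤ 1 / c ∧ q = 1 / (n : ℚ) := by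
  obtain ⟨n, hn, rfl⟩ := hq.exists_pos_eq_one_div (hc.trans_le hcq)
  exact ⟨n, hn, (le_one_div hc (by exact_mod_cast hn)).1 hcq, rfl⟩

end IsZeroOrReciprocal

theorem isListedDecomposition_of_antitone {a b c : ℚ} (hcb : c ≤ b) (hba : b ≤ a)
    (ha : IsZeroOrReciprocal a) (hb : IsZeroOrReciprocal b) (hsum : a + b + c = 1) :
    IsListedDecomposition {a, b, c} := by
  obtain ⟨n, hn, hn_le, rfl⟩ := ha.exists_eq_one_div_of_le (c := 1/3) (by norm_num) (by linarith)
  have hn3 : n ≤ 3 := by norm_num at hn_le; exact_mod_cast hn_le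
  interval_cases n
  · have hb0 : 0 ≤ b := by norm_num at hsum; linarith
    rcases hb0.lt_or_eq with hbpos | rfl
    · left
      obtain ⟨m, hm, rfl⟩ := hb.exists_pos_eq_one_div hbpos
      exact ⟨m, hm, by rw [show c = -(1 / m) by norm_num at hsum ⊢; linarith]; norm_num⟩
    · right; left
      rw [show c = 0 by norm_num at hsum; linarith]
      norm_num
  · obtain ⟨m, hm, hm_le, rfl⟩ := hb.exists_eq_one_div_of_le (c := 1/4) (by norm_num)
      (by norm_num at hsum ⊢; linarith)
    have hm4 : m ≤ 4 := by norm_num at hm_le; exact_mod_cast hm_le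
    interval_cases m
    · norm_num at hba
    · right; right; left
      norm_num at hsum ⊢
      rw [show c = 0 by linarith]
    · right; right; right; left
      norm_num at hsum ⊢
      rw [show c = 1/6 by linarith]
    · right; right; right; right; left
      norm_num at hsum ⊢
      rw [show c = 1/4 by linarith]
  · right; right; right; right; right
    norm_num at hsum hba ⊢
    rw [show b = 1/3 by linarith, show c = 1/3 by linarith]

/-- Decompositions of 1 as a sum of three rationals, each of which is 0 or the reciprocal
of a nonzero integer. -/
theorem stmt18 (x y z : ℚ)
    (hx : x = 0 ∨ ∃ n : ℤ, n ≠ 0 ∧ x = 1 / (n : ℚ))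
    (hy : y = 0 ∨ ∃ n : ℤ, n ≠ 0 ∧ y = 1 / (n : ℚ))
    (hz : z = 0 ∨ ∃ n : ℤ, n ≠ 0 ∧ z = 1 / (n : ℚ))
    (hsum : x + y + z = 1) :
    (∃ n : ℤ, 1 ≤ n ∧
      ({x, y, z} : Multiset ℚ) = {1, 1 / (n : ℚ), -(1 / (n : ℚ))}) ∨
    ({x, y, z} : Multiset ℚ) = {1, 0, 0} ∨
    ({x, y, z} : Multiset ℚ) = {1/2, 1/2, 0} ∨
    ({x, y, z} : Multiset ℚ) = {1/2, 1/3, 1/6} ∨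
    ({x, y, z} : Multiset ℚ) = {1/2, 1/4, 1/4} ∨
    ({x, y, z} : Multiset ℚ) = {1/3, 1/3, 1/3} := by
  obtain ⟨a, b, c, hsort, hcb, hba⟩ := Multiset.exists_eq_triple_antitone x y z
  have hmem : ∀ q ∈ ({x, y, z} : Multiset ℚ), IsZeroOrReciprocal q := by
    simpa using ⟨hx, hy, hz⟩
  have hsum' : a + b + c = 1 := by
    have hsums := congrArg Multiset.sum hsort
    simp only [Multiset.insert_eq_cons, Multiset.sum_cons, Multiset.sum_singleton] at hsums
    linarith
  rw [hsort] at hmem ⊢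
  exact isListedDecomposition_of_antitone hcb hba (hmem a (by simp)) (hmem b (by simp)) hsum'
end
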